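/- arXiv:1612.07133 — 6 statements merged into one kernel-verified Lean document; each statement's English description precedes it below -/
import Mathlib

section
/- A permutation x in S_{2n} is a twisted identity (i.e., x = θ(w^{-1})w for some w in S_{2n}, where θ(w) = w_0 w w_0) if and only if w_0 x is a fixed point free involution; in particular, left multiplication by w_0 gives a bijection between the set ι of twisted identities and the set F_{2n} of fixed point free involutions in S_{2n}. -/
open Equiv

/-- Coxeter length of a permutation = number of inversions. -/
def len {N : ℕ} (w : Equiv.Perm (Fin N)) : ℕ :=
  (Finset.univ.filter fun p : Fin N × Fin N => p.1 < p.2 ∧ w p.2 < w p.1).card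

/-- The Bruhat order on the symmetric group: reflexive-transitive closure of
right multiplication by a transposition that increases length. -/
def bruhatLE {N : ℕ} (u v : Equiv.Perm (Fin N)) : Prop :=
  Relation.ReflTransGen
    (fun x y => ∃ t : Equiv.Perm (Fin N), t.IsSwap ∧ y = x * t ∧ len x < len y) u v

/-- The Coxeter generator `s i` (1-based): the transposition of `i` and `i+1`,
i.e. of the 0-based points `i-1` and `i`. -/
def gen (N i : ℕ) : Equiv.Perm (Fin N) :=
  if h : 0 < i ∧ i < N then Equiv.swap ⟨i - 1, by omega⟩ ⟨i, h.2⟩ else 1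

/-- The reverse permutation `w₀`, the longest element. -/
def w0 (N : ℕ) : Equiv.Perm (Fin N) := Fin.revPerm

/-- The automorphism θ(w) = w₀ w w₀. -/
def theta {N : ℕ} (w : Equiv.Perm (Fin N)) : Equiv.Perm (Fin N) := w0 N * w * w0 N

/-- The set ι of twisted identities. -/
def iotaSet (N : ℕ) : Set (Equiv.Perm (Fin N)) := {x | ∃ w, x = theta w⁻¹ * w}

/-- The set of twisted involutions. -/
def twInvSet (N : ℕ) : Set (Equiv.Perm (Fin N)) := {x | theta x = x⁻¹}

/-- Cover relation of the subposet induced by `P` with respect to order relation `le`. -/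
def CovByIn {α : Type*} (le : α → α → Prop) (P : Set α) (x y : α) : Prop :=
  x ∈ P ∧ y ∈ P ∧ le x y ∧ x ≠ y ∧ ∀ z ∈ P, le x z → le z y → z = x ∨ z = y

/-- A special partial matching of the subposet induced by `P` (with maximum `top`)
with respect to the order relation `le`. -/
def IsSPM {α : Type*} (le : α → α → Prop) (P : Set α) (top : α) (M : α → α) : Prop :=
  top ∈ P ∧ (∀ x ∈ P, M x ∈ P) ∧ (∀ x ∈ P, M (M x) = x) ∧
  CovByIn le P (M top) top ∧
  (∀ x ∈ P, CovByIn le P (M x) x ∨ M x = x ∨ CovByIn le P x (M x)) ∧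
  ∀ x ∈ P, ∀ y ∈ P, CovByIn le P x y → M x ≠ y → (le (M x) (M y) ∧ M x ≠ M y)

/-- The lower interval ι[e,w] = {x ∈ ι : x ≤ w}. -/
def iotaIdeal (N : ℕ) (w : Equiv.Perm (Fin N)) : Set (Equiv.Perm (Fin N)) :=
  {x | x ∈ iotaSet N ∧ bruhatLE x w}

/-- The interval ι[u,w] = {x ∈ ι : u ≤ x ≤ w}. -/
def iotaInt (N : ℕ) (u w : Equiv.Perm (Fin N)) : Set (Equiv.Perm (Fin N)) :=
  {x | x ∈ iotaSet N ∧ bruhatLE u x ∧ bruhatLE x w}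

/-- The action of the symbol σ_i on twisted involutions: `x·σ = xs` if `θ(s)xs = x`,
and `x·σ = θ(s)xs` otherwise. -/
noncomputable def sact (N : ℕ) (x : Equiv.Perm (Fin N)) (i : ℕ) : Equiv.Perm (Fin N) := by
  classical
  exact if theta (gen N i) * x * gen N i = x then x * gen N i
        else theta (gen N i) * x * gen N i

/-- The twisted involution `σ_{i₁} ⋯ σ_{i_k}` given by acting on the identity. -/
noncomputable def sword (N : ℕ) (l : List ℕ) : Equiv.Perm (Fin N) := l.foldl (sact N) 1

/-- The set of fixed point free involutions. -/
def fpfInv (N : ℕ) : Set (Equiv.Perm (Fin N)) := {x | x * x = 1 ∧ ∀ i, x i ≠ i}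

/-!
Since `w₀` is an involution, `w₀ θ(w⁻¹) w = w⁻¹ w₀ w`, so `x` is a twisted identity exactly when
`w₀ x` is conjugate to `w₀`. In `S_{2n}` the reversal `w₀` is a fixed point free involution, and
the fixed point free involutions are precisely the permutations of cycle type `2ⁿ`, which form a
single conjugacy class.
-/

namespace Equiv.Perm

variable {α : Type*} [Fintype α] [DecidableEq α]

theorem mul_self_eq_one_and_fixedPointFree_iff_cycleType {n : ℕ} (hα : Fintype.card α = 2 * n)
    (σ : Perm α) : (σ * σ = 1 ∧ ∀ a, σ a ≠ a) ↔ σ.cycleType = Multiset.replicate n 2 := by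
  have hsupport : σ.support = Finset.univ ↔ ∀ a, σ a ≠ a := by
    simp only [Finset.eq_univ_iff_forall, mem_support]
  constructor
  · rintro ⟨hinv, hfree⟩
    have htwo : ∀ k ∈ σ.cycleType, k = 2 := by
      intro k hk
      have hk2 : k ∣ 2 := (dvd_of_mem_cycleType hk).trans
        (orderOf_dvd_of_pow_eq_one (by rw [pow_two, hinv]))
      have := two_le_of_mem_cycleType hk
      have := Nat.le_of_dvd two_pos hk2
      omega
    have hsum : σ.cycleType.sum = 2 * n := by
      rw [sum_cycleType, hsupport.2 hfree, Finset.card_univ, hα]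
    rw [Multiset.eq_replicate_card.2 htwo] at hsum ⊢
    rw [Multiset.sum_replicate, smul_eq_mul] at hsum
    congr 1
    omega
  · intro hσ
    have horder : orderOf σ ∣ 2 := by
      rw [← lcm_cycleType, Multiset.lcm_dvd, hσ]
      intro k hk
      rw [Multiset.eq_of_mem_replicate hk]
    have hcard : σ.support.card = Fintype.card α := by
      rw [← sum_cycleType, hσ, Multiset.sum_replicate, smul_eq_mul, hα, mul_comm]
    refine ⟨?_, hsupport.1 (Finset.eq_univ_of_card _ hcard)⟩
    rw [← pow_two]
    exact orderOf_dvd_iff_pow_eq_one.1 horder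

end Equiv.Perm

theorem mem_fpfInv_iff_cycleType (n : ℕ) (σ : Perm (Fin (2 * n))) :
    σ ∈ fpfInv (2 * n) ↔ σ.cycleType = Multiset.replicate n 2 :=
  Perm.mul_self_eq_one_and_fixedPointFree_iff_cycleType (Fintype.card_fin _) σ

theorem w0_mul_self (N : ℕ) : w0 N * w0 N = 1 := by
  ext i
  simp [w0]

theorem w0_mem_fpfInv (n : ℕ) : w0 (2 * n) ∈ fpfInv (2 * n) := by
  refine ⟨w0_mul_self _, fun i hi => ?_⟩
  have := congrArg Fin.val hi
  simp only [w0, Fin.revPerm_apply, Fin.val_rev] at this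
  omega

theorem w0_mul_theta_inv_mul (N : ℕ) (w : Perm (Fin N)) :
    w0 N * (theta w⁻¹ * w) = w⁻¹ * w0 N * w := by
  simp only [theta, ← mul_assoc, w0_mul_self, one_mul]

theorem mem_iotaSet_iff_isConj (N : ℕ) (x : Perm (Fin N)) :
    x ∈ iotaSet N ↔ IsConj (w0 N) (w0 N * x) := by
  rw [isConj_iff]
  constructor
  · rintro ⟨w, rfl⟩
    exact ⟨w⁻¹, by rw [w0_mul_theta_inv_mul, inv_inv]⟩
  · rintro ⟨g, hg⟩
    refine ⟨g⁻¹, ?_⟩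
    rw [← mul_right_inj (w0 N), w0_mul_theta_inv_mul, ← hg, inv_inv]

theorem mem_iotaSet_iff_w0_mul_mem_fpfInv (n : ℕ) (x : Perm (Fin (2 * n))) :
    x ∈ iotaSet (2 * n) ↔ w0 (2 * n) * x ∈ fpfInv (2 * n) := by
  rw [mem_iotaSet_iff_isConj, Perm.isConj_iff_cycleType_eq, mem_fpfInv_iff_cycleType,
    (mem_fpfInv_iff_cycleType n _).1 (w0_mem_fpfInv n), eq_comm]

/-- `x` is a twisted identity iff `w₀x` is a fixed point free involution;
in particular left multiplication by `w₀` is a bijection from ι onto F_{2n}. -/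
theorem stmt2 (n : ℕ) :
    (∀ x : Equiv.Perm (Fin (2*n)), x ∈ iotaSet (2*n) ↔ w0 (2*n) * x ∈ fpfInv (2*n)) ∧
    Set.BijOn (fun x => w0 (2*n) * x) (iotaSet (2*n)) (fpfInv (2*n)) :=
  ⟨mem_iotaSet_iff_w0_mul_mem_fpfInv n,
    Equiv.bijOn (e := Equiv.mulLeft (w0 (2 * n)))
      fun x => (mem_iotaSet_iff_w0_mul_mem_fpfInv n x).symm⟩
end

section
/- If x is a twisted identity in S_{2n} (i.e., x = θ(w^{-1})w for some w, where θ(w) = w_0ww_0), then the Coxeter length ℓ(x) is even. -/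
open Equiv

namespace Equiv.Perm

theorem signAux_eq_neg_one_pow_len {N : ℕ} (x : Perm (Fin N)) :
    signAux x = (-1 : ℤˣ) ^ len x := by
  classical
  rw [signAux, Finset.prod_ite, Finset.prod_const, Finset.prod_const_one, mul_one, len]
  congr 1
  -- `signAux` counts the pairs `b < a` with `x a ≤ x b`; swapping the pair turns them into inversions.
  refine Finset.card_bij' (fun p _ => (p.2, p.1)) (fun p _ => ⟨p.2, p.1⟩) ?_ ?_
    (fun _ _ => rfl) (fun _ _ => rfl)
  · rintro ⟨a, b⟩ hab
    simp only [Finset.mem_filter, mem_finPairsLT] at hab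
    have hne : x a ≠ x b := fun h => hab.1.ne' (x.injective h)
    simpa using ⟨hab.1, lt_of_le_of_ne hab.2 hne⟩
  · rintro ⟨a, b⟩ hab
    simp only [Finset.mem_filter, Finset.mem_univ, true_and] at hab
    simpa [mem_finPairsLT] using ⟨hab.1, hab.2.le⟩

theorem signAux_theta {N : ℕ} (w : Perm (Fin N)) : signAux (theta w) = signAux w := by
  rw [theta, signAux_mul, signAux_mul, mul_right_comm, Int.units_mul_self, one_mul]

theorem signAux_eq_one_of_mem_iotaSet {N : ℕ} {x : Perm (Fin N)} (hx : x ∈ iotaSet N) :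
    signAux x = 1 := by
  obtain ⟨w, rfl⟩ := hx
  rw [signAux_mul, signAux_theta, signAux_inv, Int.units_mul_self]

theorem even_len_of_mem_iotaSet {N : ℕ} {x : Perm (Fin N)} (hx : x ∈ iotaSet N) :
    Even (len x) := by
  have h := signAux_eq_one_of_mem_iotaSet hx
  rw [signAux_eq_neg_one_pow_len] at h
  exact (neg_one_pow_eq_one_iff_even (by decide)).mp h

end Equiv.Perm

/-- every twisted identity has even Coxeter length. -/
theorem stmt4 (n : ℕ) (x : Equiv.Perm (Fin (2*n))) (hx : x ∈ iotaSet (2*n)) :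
    Even (len x) :=
  Perm.even_len_of_mem_iotaSet hx
end

section
/- Let τ = s_{i+1}s_i s_{i-1} s_{2n-i-1} s_{2n-i} s_{2n-i+1} (the twisted involution with S-expression σ_{i+1}σ_iσ_{i-1}) for 2 ≤ i ≤ n-2, and let w be a twisted involution in S_{2n} (θ(w) = w^{-1} where θ(w) = w_0ww_0). Then τ ≤ w in Bruhat order fails if and only if w maps the set {1, ..., i-1} into {1, ..., i+1}. -/
open Equiv

/-! Positions and values are 0-based. By the tableau criterion, `u ≤ w` in Bruhat order iff
`r_w ≤ r_u` pointwise, where `r_w p q = #{k < p | w k < q}`. The permutation `τ` is a product of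
two disjoint 4-cycles, `i-2 ↦ i+1 ↦ i ↦ i-1 ↦ i-2` and its mirror image, so `r_τ p q` takes the
largest value a rank function can take except on two triangles `i-1 ≤ p ≤ q ≤ i+1` and
`2n-i-1 ≤ p ≤ q ≤ 2n-i+1`, where it is one less. Hence `τ ≤ w` iff `w` sends some `k < i-1` to at
least `i+1` and some `k < 2n-i-1` to at least `2n-i+1`. For a twisted involution
`w (rev (w k)) = rev k`, so the first condition implies the second. -/

open Finset

section Length

variable {N : ℕ}

theorem len_lt_len_mul_swap (w : Perm (Fin N)) {a b : Fin N} (hab : a < b) (hw : w a < w b) :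
    len w < len (w * swap a b) := by
  -- An injection of the inversions of `w` into those of `w * swap a b`, missing `(a, b)`.
  let F : Fin N × Fin N → Fin N × Fin N := fun pq =>
    (if b < pq.2 then swap a b pq.1 else pq.1, if pq.1 < a then swap a b pq.2 else pq.2)
  have hFF : ∀ pq : Fin N × Fin N, pq.1 < pq.2 → F (F pq) = pq := by
    rintro ⟨p, q⟩ hpq
    simp only [F, swap_apply_def]
    grind
  have hmem : (a, b) ∈ univ.filter fun pq : Fin N × Fin N =>
      pq.1 < pq.2 ∧ (w * swap a b) pq.2 < (w * swap a b) pq.1 := by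
    refine Finset.mem_filter.mpr ⟨mem_univ _, hab, ?_⟩
    simpa only [Perm.mul_apply, swap_apply_left, swap_apply_right] using hw
  unfold len
  rw [← card_erase_add_one hmem, Nat.lt_succ_iff]
  refine card_le_card_of_injOn F ?_ ?_
  · rintro ⟨p, q⟩ hpq
    simp only [coe_filter, mem_univ, true_and, Set.mem_ofPred_eq, coe_erase, Set.mem_sdiff,
      Set.mem_singleton_iff, Perm.mul_apply, F, swap_apply_def] at hpq ⊢
    grind
  · rintro x hx y hy hxy
    simp only [coe_filter, mem_univ, true_and, Set.mem_ofPred_eq] at hx hy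
    rw [← hFF x hx.1, hxy, hFF y hy.1]

theorem lt_of_len_lt_len_mul_swap (x : Perm (Fin N)) {a b : Fin N} (hab : a < b)
    (hlen : len x < len (x * swap a b)) : x a < x b := by
  by_contra! hba
  have hlt : (x * swap a b) a < (x * swap a b) b := by
    simpa [swap_apply_left, swap_apply_right] using
      lt_of_le_of_ne hba (x.injective.ne hab.ne')
  have := len_lt_len_mul_swap (x * swap a b) hab hlt
  rw [mul_assoc, swap_mul_self, mul_one] at this
  omega

theorem len_le_mul_self (x : Perm (Fin N)) : len x ≤ N * N := by
  simpa [len] using card_filter_le (univ : Finset (Fin N × Fin N)) _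

end Length

section PermRank

variable {N : ℕ}

def permRank (w : Perm (Fin N)) (p q : ℕ) : ℕ :=
  #{k : Fin N | (k : ℕ) < p ∧ (w k : ℕ) < q}

theorem permRank_inv (w : Perm (Fin N)) (p q : ℕ) : permRank w⁻¹ q p = permRank w p q := by
  refine card_nbij' (⇑w⁻¹) w ?_ ?_ ?_ ?_ <;> intro k <;> simp [coe_filter, and_comm]

theorem permRank_mul_swap (x : Perm (Fin N)) {a b : Fin N} (hab : a < b) (p q : ℕ) :
    permRank (x * swap a b) p q + (if a < p ∧ p ≤ b ∧ x a < q then 1 else 0) =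
      permRank x p q + (if a < p ∧ p ≤ b ∧ x b < q then 1 else 0) := by
  have hab' : (a : ℕ) < b := hab
  have hreindex :
      permRank (x * swap a b) p q = #{k : Fin N | (swap a b k : ℕ) < p ∧ (x k : ℕ) < q} := by
    refine card_nbij' (swap a b) (swap a b) ?_ ?_ ?_ ?_ <;> intro k <;>
      simp only [coe_filter, mem_univ, true_and, Set.mem_ofPred_eq] <;>
      simp only [Perm.mul_apply, swap_apply_self, imp_self, implies_true]
  have hsplit : ∀ P : Fin N → Prop, [DecidablePred P] → #{k | P k} =
      ∑ k ∈ univ \ {a, b}, (if P k then 1 else 0) +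
        ((if P a then 1 else 0) + if P b then 1 else 0) := by
    intro P _
    rw [card_filter, ← sum_sdiff (subset_univ {a, b}), sum_pair hab.ne]
  have hoff : ∑ k ∈ univ \ {a, b}, (if (swap a b k : ℕ) < p ∧ (x k : ℕ) < q then 1 else 0) =
      ∑ k ∈ univ \ {a, b}, (if (k : ℕ) < p ∧ (x k : ℕ) < q then 1 else 0) := by
    refine sum_congr rfl fun k hk => ?_
    simp only [mem_sdiff, mem_univ, mem_insert, mem_singleton, true_and, not_or] at hk
    rw [swap_apply_of_ne_of_ne hk.1 hk.2]
  rw [hreindex, permRank, hsplit, hsplit, hoff, swap_apply_left, swap_apply_right]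
  split_ifs <;> omega

theorem permRank_mul_swap_le (x : Perm (Fin N)) {a b : Fin N} (hab : a < b) (hx : x a < x b)
    (p q : ℕ) : permRank (x * swap a b) p q ≤ permRank x p q := by
  have h := permRank_mul_swap x hab p q
  have hx' : (x a : ℕ) < x b := hx
  split_ifs at h <;> omega

theorem permRank_le_of_bruhatLE {u w : Perm (Fin N)} (h : bruhatLE u w) (p q : ℕ) :
    permRank w p q ≤ permRank u p q := by
  induction h with
  | refl => exact le_rfl
  | tail _ hstep ih =>
    obtain ⟨_, ⟨c, d, hcd, rfl⟩, rfl, hlen⟩ := hstep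
    refine le_trans ?_ ih
    rcases hcd.lt_or_gt with hlt | hlt
    · exact permRank_mul_swap_le _ hlt (lt_of_len_lt_len_mul_swap _ hlt hlen) p q
    · rw [swap_comm] at hlen ⊢
      exact permRank_mul_swap_le _ hlt (lt_of_len_lt_len_mul_swap _ hlt hlen) p q

theorem permRank_add_card_band (w : Perm (Fin N)) (p : ℕ) {q Q : ℕ} (hqQ : q ≤ Q) :
    permRank w p q + #{k : Fin N | (k : ℕ) < p ∧ q ≤ w k ∧ (w k : ℕ) < Q} = permRank w p Q := by
  rw [permRank, permRank, ← card_union_of_disjoint]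
  · congr 1
    ext k
    simp only [mem_union, mem_filter, mem_univ, true_and]
    omega
  · exact disjoint_filter.2 fun k _ hk => by omega

end PermRank

section BruhatCriterion

variable {N : ℕ} {u w : Perm (Fin N)}

theorem apply_lt_apply_of_permRank_le (hdom : ∀ p q, permRank w p q ≤ permRank u p q)
    {j : Fin N} (hagree : ∀ k < j, u k = w k) (hj : u j ≠ w j) : u j < w j := by
  refine lt_of_le_of_ne (not_lt.1 fun hwu => ?_) hj
  have hsub : ({k : Fin N | (k : ℕ) < j + 1 ∧ (u k : ℕ) < w j + 1} : Finset (Fin N)) ⊂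
      ({k : Fin N | (k : ℕ) < j + 1 ∧ (w k : ℕ) < w j + 1} : Finset (Fin N)) := by
    refine (ssubset_iff_of_subset fun k hk => ?_).2 ⟨j, by simp, by simp; omega⟩
    simp only [mem_filter, mem_univ, true_and] at hk ⊢
    obtain hkj | rfl := lt_or_eq_of_le (Fin.le_iff_val_le_val.2 (Nat.lt_succ_iff.1 hk.1))
    · exact ⟨hk.1, hagree k hkj ▸ hk.2⟩
    · omega
  exact absurd (hdom (j + 1) (w j + 1)) (not_le.2 (card_lt_card hsub))

theorem permRank_lt_permRank_of_first_diff (hdom : ∀ p q, permRank w p q ≤ permRank u p q)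
    {j y : Fin N} (hagree : ∀ k < j, u k = w k)
    (hymin : ∀ k, j < k → k < y → ¬ (u j < u k ∧ u k ≤ w j))
    {p q : ℕ} (hjp : j < p) (hpy : p ≤ y) (hjq : u j < q) (hqw : q ≤ w j) :
    permRank w p q < permRank u p q := by
  have hband : ({k : Fin N | (k : ℕ) < p ∧ q ≤ u k ∧ (u k : ℕ) < w j + 1} : Finset (Fin N)) ⊂
      ({k : Fin N | (k : ℕ) < p ∧ q ≤ w k ∧ (w k : ℕ) < w j + 1} : Finset (Fin N)) := by
    refine (ssubset_iff_of_subset fun k hk => ?_).2 ⟨j, by simp; omega, by simp; omega⟩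
    simp only [mem_filter, mem_univ, true_and] at hk ⊢
    rcases lt_trichotomy k j with hkj | rfl | hjk
    · exact hagree k hkj ▸ hk
    · omega
    · exact absurd ⟨by omega, by omega⟩ (hymin k hjk (by omega))
  have hu := permRank_add_card_band u p (show q ≤ w j + 1 by omega)
  have hw := permRank_add_card_band w p (show q ≤ w j + 1 by omega)
  have := card_lt_card hband
  have := hdom p (w j + 1)
  omega

theorem exists_swap_permRank_le (hdom : ∀ p q, permRank w p q ≤ permRank u p q) (hne : u ≠ w) :
    ∃ a b : Fin N, a < b ∧ u a < u b ∧ ∀ p q, permRank w p q ≤ permRank (u * swap a b) p q := by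
  obtain ⟨j, hj, hjmin⟩ := wellFounded_lt.has_min {k | u k ≠ w k} <| by
    by_contra! h
    exact hne (Equiv.ext fun k => not_not.1 fun hk => (h.subset hk : k ∈ (∅ : Set _)))
  have hagree : ∀ k < j, u k = w k := fun k hk => not_not.1 fun h => hjmin k h hk
  have hlt := apply_lt_apply_of_permRank_le hdom hagree hj
  have hpre : j < u.symm (w j) ∧ u j < u (u.symm (w j)) ∧ u (u.symm (w j)) ≤ w j := by
    rw [u.apply_symm_apply]
    refine ⟨lt_of_le_of_ne (not_lt.1 fun h => ?_) fun h => hj ?_, hlt, le_rfl⟩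
    · exact h.ne (w.injective (by rw [← hagree _ h, u.apply_symm_apply]))
    · have := u.apply_symm_apply (w j)
      rwa [← h] at this
  obtain ⟨y, ⟨hjy, hy, hyw⟩, hymin⟩ :=
    wellFounded_lt.has_min {k | j < k ∧ u j < u k ∧ u k ≤ w j} ⟨_, hpre⟩
  refine ⟨j, y, hjy, hy, fun p q => ?_⟩
  have h := permRank_mul_swap u hjy p q
  by_cases hreg : j < p ∧ p ≤ y ∧ u j < q ∧ q ≤ u y
  · have := permRank_lt_permRank_of_first_diff hdom hagree
      (fun k hjk hky hk => hymin k ⟨hjk, hk⟩ hky) hreg.1 hreg.2.1 hreg.2.2.1 (by omega)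
    split_ifs at h <;> omega
  · have := hdom p q
    split_ifs at h <;> omega

theorem bruhatLE_of_permRank_le (hdom : ∀ p q, permRank w p q ≤ permRank u p q) :
    bruhatLE u w := by
  induction hm : N * N - len u using Nat.strong_induction_on generalizing u with
  | _ m ih =>
    by_cases huw : u = w
    · exact huw ▸ Relation.ReflTransGen.refl
    obtain ⟨a, b, hab, hu, hdom'⟩ := exists_swap_permRank_le hdom huw
    have hlen := len_lt_len_mul_swap u hab hu
    have := len_le_mul_self (u * swap a b)
    exact .head ⟨_, ⟨a, b, hab.ne, rfl⟩, rfl, hlen⟩ (ih _ (by omega) hdom' rfl)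

theorem bruhatLE_iff_permRank_le : bruhatLE u w ↔ ∀ p q, permRank w p q ≤ permRank u p q :=
  ⟨permRank_le_of_bruhatLE, bruhatLE_of_permRank_le⟩

end BruhatCriterion

section Corners

variable {N : ℕ} (w : Perm (Fin N)) {p q : ℕ}

theorem permRank_eq_card_filter :
    permRank w p q = #(({k : Fin N | (k : ℕ) < p} : Finset _).filter fun k => (w k : ℕ) < q) := by
  rw [permRank, filter_filter]

theorem permRank_le_card : permRank w p q ≤ #{k : Fin N | (k : ℕ) < p} :=
  (permRank_eq_card_filter w).trans_le (card_filter_le _ _)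

theorem permRank_lt_card_iff :
    permRank w p q < #{k : Fin N | (k : ℕ) < p} ↔ ∃ a : Fin N, (a : ℕ) < p ∧ q ≤ w a := by
  rw [(permRank_le_card w).lt_iff_ne, permRank_eq_card_filter, Ne, card_filter_eq_iff]
  simp

theorem permRank_le_permRank_of_forall_lt {σ : Perm (Fin N)}
    (h : ∀ k : Fin N, (k : ℕ) < p → (σ k : ℕ) < q) : permRank w p q ≤ permRank σ p q := by
  rw [permRank_eq_card_filter σ, card_filter_eq_iff.2 fun k hk => h k (by simpa using hk)]
  exact permRank_le_card w

theorem permRank_le_permRank_of_forall_lt_right {σ : Perm (Fin N)}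
    (h : ∀ k : Fin N, (σ k : ℕ) < q → (k : ℕ) < p) : permRank w p q ≤ permRank σ p q := by
  rw [← permRank_inv w, ← permRank_inv σ]
  exact permRank_le_permRank_of_forall_lt _ fun v hv => h _ (by simpa using hv)

theorem permRank_le_permRank_of_forall_ne {σ : Perm (Fin N)}
    (hw : ∃ a : Fin N, (a : ℕ) < p ∧ q ≤ w a) (s : Fin N)
    (h : ∀ k : Fin N, (k : ℕ) < p → k ≠ s → (σ k : ℕ) < q) : permRank w p q ≤ permRank σ p q := by
  have hlt := (permRank_lt_card_iff w).2 hw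
  have : #{k : Fin N | (k : ℕ) < p} ≤ permRank σ p q + 1 :=
    calc #{k : Fin N | (k : ℕ) < p}
        ≤ #(insert s ({k : Fin N | (k : ℕ) < p ∧ (σ k : ℕ) < q} : Finset _)) :=
          card_le_card fun k hk => by
            simp only [mem_filter, mem_univ, true_and, mem_insert] at hk ⊢
            by_cases hks : k = s
            · exact .inl hks
            · exact .inr ⟨hk, h k hk hks⟩
      _ ≤ permRank σ p q + 1 := card_insert_le _ _
  omega

end Corners

theorem apply_rev_apply_of_theta_eq_inv {N : ℕ} {w : Perm (Fin N)} (hw : theta w = w⁻¹)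
    (a : Fin N) : w (w a).rev = a.rev := by
  have h : ∀ x : Fin N, (w x.rev).rev = w⁻¹ x := fun x => by
    simpa [theta, w0, Perm.mul_apply, Fin.revPerm_apply] using congrArg (· x) hw
  rw [← Fin.rev_rev (w _), h]
  simp

theorem gen_apply_val {N j : ℕ} (hj : j < N) (k : Fin N) :
    (gen N j k : ℕ) = if (k : ℕ) + 1 = j then j else if (k : ℕ) = j then j - 1 else k := by
  by_cases hj0 : j = 0
  · subst hj0
    simp [gen]
  · rw [gen, dif_pos ⟨by omega, hj⟩, swap_apply_def]
    split_ifs <;> simp only [Fin.ext_iff] at * <;> omega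

theorem gen_mul_gen_mul_gen_apply_val {N m : ℕ} (hm : 0 < m) (hmN : m + 2 < N) (k : Fin N) :
    ((gen N (m + 2) * gen N (m + 1) * gen N m) k : ℕ) =
      if (k : ℕ) + 1 = m then m + 2 else if m ≤ k ∧ (k : ℕ) ≤ m + 2 then k - 1 else k := by
  simp only [Perm.mul_apply, gen_apply_val hmN, gen_apply_val (show m + 1 < N by omega),
    gen_apply_val (show m < N by omega)]
  split_ifs <;> omega

def tau (n i : ℕ) : Perm (Fin (2 * n)) :=
  gen (2*n) (2*n - (i-1)) * gen (2*n) (2*n - i) * gen (2*n) (2*n - (i+1)) *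
    gen (2*n) (i+1) * gen (2*n) i * gen (2*n) (i-1)

section Tau

variable {n i : ℕ}

theorem tau_eq (h2 : 2 ≤ i) (hi : i ≤ n - 2) :
    tau n i = (gen (2*n) (2*n-i-1 + 2) * gen (2*n) (2*n-i-1 + 1) * gen (2*n) (2*n-i-1)) *
      (gen (2*n) (i-1 + 2) * gen (2*n) (i-1 + 1) * gen (2*n) (i-1)) := by
  rw [show 2*n-i-1 + 2 = 2*n - (i-1) by omega, show 2*n-i-1 + 1 = 2*n - i by omega,
    show 2*n-i-1 = 2*n - (i+1) by omega, show i-1 + 2 = i+1 by omega, show i-1 + 1 = i by omega]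
  simp only [tau, mul_assoc]

theorem tau_apply_cases (h2 : 2 ≤ i) (hi : i ≤ n - 2) (k : Fin (2 * n)) :
    (k : ℕ) = i - 2 ∧ (tau n i k : ℕ) = i + 1 ∨
      (k : ℕ) = 2*n - i - 2 ∧ (tau n i k : ℕ) = 2*n - i + 1 ∨
      (k : ℕ) ≠ i - 2 ∧ (k : ℕ) ≠ 2*n - i - 2 ∧ (tau n i k : ℕ) ≤ k ∧ (k : ℕ) ≤ tau n i k + 1 := by
  rw [tau_eq h2 hi, Perm.mul_apply, gen_mul_gen_mul_gen_apply_val (by omega) (by omega),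
    gen_mul_gen_mul_gen_apply_val (by omega) (by omega)]
  split_ifs <;> omega

theorem permRank_tau_lt_card (h2 : 2 ≤ i) (hi : i ≤ n - 2) :
    permRank (tau n i) (i - 1) (i + 1) < #{k : Fin (2 * n) | (k : ℕ) < i - 1} := by
  refine (permRank_lt_card_iff _).2 ⟨⟨i - 2, by omega⟩, by simp only; omega, ?_⟩
  have := tau_apply_cases h2 hi ⟨i - 2, by omega⟩
  simp only at this
  omega

theorem permRank_le_permRank_tau (h2 : 2 ≤ i) (hi : i ≤ n - 2) {w : Perm (Fin (2 * n))}
    (ha : ∃ a : Fin (2 * n), (a : ℕ) < i - 1 ∧ i + 1 ≤ w a)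
    (hb : ∃ b : Fin (2 * n), (b : ℕ) < 2*n - i - 1 ∧ 2*n - i + 1 ≤ w b) (p q : ℕ) :
    permRank w p q ≤ permRank (tau n i) p q := by
  have hτ := tau_apply_cases h2 hi
  by_cases hpq : p ≤ q
  swap
  · exact permRank_le_permRank_of_forall_lt_right w fun k hk => by have := hτ k; omega
  by_cases hD1 : i - 1 ≤ p ∧ q ≤ i + 1
  · obtain ⟨a, hap, haq⟩ := ha
    refine permRank_le_permRank_of_forall_ne w ⟨a, by omega, by omega⟩ ⟨i - 2, by omega⟩
      fun k hk hks => ?_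
    have : (k : ℕ) ≠ i - 2 := fun h => hks (Fin.ext h)
    have := hτ k
    omega
  by_cases hD2 : 2*n - i - 1 ≤ p ∧ q ≤ 2*n - i + 1
  · obtain ⟨b, hbp, hbq⟩ := hb
    refine permRank_le_permRank_of_forall_ne w ⟨b, by omega, by omega⟩ ⟨2*n - i - 2, by omega⟩
      fun k hk hks => ?_
    have : (k : ℕ) ≠ 2*n - i - 2 := fun h => hks (Fin.ext h)
    have := hτ k
    omega
  · exact permRank_le_permRank_of_forall_lt w fun k hk => by have := hτ k; omega

end Tau

/-- for τ = s_{2n-(i-1)} s_{2n-i} s_{2n-(i+1)} s_{i+1} s_i s_{i-1} with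
2 ≤ i ≤ n-2 and a twisted involution w: τ ≰ w iff w({1,...,i-1}) ⊆ {1,...,i+1}. -/
theorem stmt7 (n i : ℕ) (h2 : 2 ≤ i) (hi : i ≤ n - 2)
    (w : Equiv.Perm (Fin (2*n))) (hw : theta w = w⁻¹) :
    ¬ bruhatLE
        (gen (2*n) (2*n - (i-1)) * gen (2*n) (2*n - i) * gen (2*n) (2*n - (i+1)) *
          gen (2*n) (i+1) * gen (2*n) i * gen (2*n) (i-1)) w ↔
      ∀ k : Fin (2*n), (k : ℕ) + 1 ≤ i - 1 → (w k : ℕ) + 1 ≤ i + 1 := by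
  change ¬ bruhatLE (tau n i) w ↔ _
  rw [bruhatLE_iff_permRank_le]
  constructor
  · intro hnle k hk
    by_contra! hwk
    refine hnle (permRank_le_permRank_tau h2 hi ⟨k, by omega, by omega⟩ ⟨(w k).rev, ?_, ?_⟩)
    · rw [Fin.val_rev]
      omega
    · rw [apply_rev_apply_of_theta_eq_inv hw, Fin.val_rev]
      omega
  · intro hsub hle
    obtain ⟨a, ha, hwa⟩ := (permRank_lt_card_iff w).1
      ((hle (i - 1) (i + 1)).trans_lt (permRank_tau_lt_card h2 hi))
    have := hsub a (by omega)
    omega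
end

section
/- In the Bruhat order on the symmetric group S_n, the element c' = s_i s_{i-1} s_{i+1} s_i is the unique element covering both a' = s_i s_{i-1} s_i and b' = s_i s_{i+1} s_i, for 2 ≤ i ≤ n-2. -/
/-!
Write `i = a + 2`. On the 0-based points `a < a+1 < a+2 < a+3`, `a'` and `b'` are the
transpositions `(a a+2)` and `(a+1 a+3)`, both of length 3, and `c'` is their product, of
length 4, so `c'` covers both. Conversely, a cover of `u` is `u t` for a transposition `t`.
If `c = a' t = b' t'`, then `a' b' = t' t`; the support of the left side has four points,
so `t` and `t'` are disjoint, and comparing cycle factors gives `t ∈ {a', b'}`. The case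
`t = a'` would make `c` the identity.
-/

open Equiv

open Finset

namespace Equiv.Perm

variable {α : Type*} [DecidableEq α]

theorem IsSwap.mul_self_eq_one {t : Perm α} (ht : t.IsSwap) : t * t = 1 := by
  obtain ⟨x, y, -, rfl⟩ := ht
  exact swap_mul_self x y

variable [Fintype α]

theorem IsSwap.eq_or_eq_of_disjoint_mul_eq_mul {a b t t' : Perm α} (ha : a.IsSwap)
    (hb : b.IsSwap) (hab : a.Disjoint b) (ht : t.IsSwap) (ht' : t'.IsSwap)
    (h : a * b = t' * t) : t = a ∨ t = b := by
  have htt' : t'.Disjoint t := by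
    by_contra hnd
    rw [disjoint_iff_disjoint_support, not_disjoint_iff_nonempty_inter] at hnd
    have hab4 : #(a * b).support = 4 := by
      rw [hab.card_support_mul, card_support_eq_two.2 ha, card_support_eq_two.2 hb]
    have htt'3 : #(t' * t).support < 4 := calc
      #(t' * t).support ≤ #(t'.support ∪ t.support) := card_le_card (support_mul_le _ _)
      _ < #t'.support + #t.support := by
        rw [← card_union_add_card_inter]; have := hnd.card_pos; omega
      _ = 4 := by rw [card_support_eq_two.2 ht, card_support_eq_two.2 ht']
    rw [h] at hab4
    omega
  have hfactors := congrArg cycleFactorsFinset h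
  rw [hab.cycleFactorsFinset_mul_eq_union, htt'.cycleFactorsFinset_mul_eq_union,
    ha.isCycle.cycleFactorsFinset_eq_singleton, hb.isCycle.cycleFactorsFinset_eq_singleton,
    ht.isCycle.cycleFactorsFinset_eq_singleton,
    ht'.isCycle.cycleFactorsFinset_eq_singleton] at hfactors
  have hmem : t ∈ ({a} ∪ {b} : Finset (Perm α)) := by rw [hfactors]; simp
  simpa using hmem

end Equiv.Perm

theorem len_one {N : ℕ} : len (1 : Perm (Fin N)) = 0 := by
  rw [len, card_eq_zero, filter_eq_empty_iff]
  exact fun _ _ h => lt_asymm h.1 h.2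

theorem bruhatLE.eq_or_len_lt {N : ℕ} {u v : Perm (Fin N)} (h : bruhatLE u v) :
    u = v ∨ len u < len v := by
  induction h with
  | refl => exact Or.inl rfl
  | tail _ hstep ih =>
    obtain ⟨t, -, -, hlt⟩ := hstep
    rcases ih with rfl | hlen
    · exact Or.inr hlt
    · exact Or.inr (hlen.trans hlt)

theorem bruhatLE_mul_swap {N : ℕ} {u t : Perm (Fin N)} (ht : t.IsSwap) (h : len u < len (u * t)) :
    bruhatLE u (u * t) :=
  Relation.ReflTransGen.single ⟨t, ht, rfl, h⟩

theorem covByIn_of_len_eq_succ {N : ℕ} {u v : Perm (Fin N)} (hle : bruhatLE u v)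
    (hlen : len v = len u + 1) : CovByIn bruhatLE Set.univ u v := by
  refine ⟨trivial, trivial, hle, fun h => by rw [h] at hlen; omega, fun z _ huz hzv => ?_⟩
  rcases huz.eq_or_len_lt with rfl | hlt
  · exact Or.inl rfl
  rcases hzv.eq_or_len_lt with rfl | hlt'
  · exact Or.inr rfl
  omega

theorem exists_isSwap_of_covByIn {N : ℕ} {u v : Perm (Fin N)}
    (h : CovByIn bruhatLE Set.univ u v) :
    ∃ t : Perm (Fin N), t.IsSwap ∧ v = u * t ∧ len u < len v := by
  obtain ⟨-, -, hle, hne, hmin⟩ := h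
  rcases Relation.ReflTransGen.cases_head hle with rfl | ⟨z, ⟨t, ht, rfl, hlt⟩, hzv⟩
  · exact absurd rfl hne
  rcases hmin (u * t) trivial (bruhatLE_mul_swap ht hlt) hzv with h | rfl
  · rw [h] at hlt; exact absurd hlt (lt_irrefl _)
  · exact ⟨t, ht, rfl, hlt⟩

theorem covByIn_mul_of_disjoint {N : ℕ} {a b : Perm (Fin N)} (ha : a.IsSwap) (hb : b.IsSwap)
    (hab : a.Disjoint b) (hla : len (a * b) = len a + 1) (hlb : len (a * b) = len b + 1) :
    CovByIn bruhatLE Set.univ a (a * b) ∧ CovByIn bruhatLE Set.univ b (a * b) ∧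
      ∀ c, CovByIn bruhatLE Set.univ a c → CovByIn bruhatLE Set.univ b c → c = a * b := by
  have hcomm : a * b = b * a := hab.commute
  refine ⟨covByIn_of_len_eq_succ (bruhatLE_mul_swap hb (by omega)) hla, ?_,
    fun c hac hbc => ?_⟩
  · rw [hcomm] at hlb ⊢
    exact covByIn_of_len_eq_succ (bruhatLE_mul_swap ha (by omega)) hlb
  obtain ⟨t, ht, rfl, hlt⟩ := exists_isSwap_of_covByIn hac
  obtain ⟨t', ht', hct', -⟩ := exists_isSwap_of_covByIn hbc
  have h : a * b = t' * t := calc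
    a * b = b * (a * t) * t := by rw [hcomm, mul_assoc, mul_assoc, ht.mul_self_eq_one, mul_one]
    _ = t' * t := by rw [hct', ← mul_assoc, hb.mul_self_eq_one, one_mul]
  rcases ha.eq_or_eq_of_disjoint_mul_eq_mul hb hab ht ht' h with rfl | rfl
  · rw [ha.mul_self_eq_one, len_one] at hlt
    omega
  · rfl

theorem gen_succ {N a : ℕ} (h : a + 1 < N) : gen N (a + 1) = swap ⟨a, by omega⟩ ⟨a + 1, h⟩ := by
  rw [gen, dif_pos ⟨a.succ_pos, h⟩]
  rfl

theorem len_swap_add_two {N a : ℕ} (h : a + 2 < N) :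
    len (swap (⟨a, by omega⟩ : Fin N) ⟨a + 2, h⟩) = 3 := by
  have hinv : (univ.filter fun p : Fin N × Fin N => p.1 < p.2 ∧
      swap (⟨a, by omega⟩ : Fin N) ⟨a + 2, h⟩ p.2 < swap (⟨a, by omega⟩ : Fin N) ⟨a + 2, h⟩ p.1)
      = {(⟨a, by omega⟩, ⟨a + 1, by omega⟩), (⟨a, by omega⟩, ⟨a + 2, h⟩),
          (⟨a + 1, by omega⟩, ⟨a + 2, h⟩)} := by
    ext ⟨p, q⟩
    simp only [mem_filter, mem_univ, true_and, mem_insert, mem_singleton, Prod.mk.injEq,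
      swap_apply_def, Fin.lt_def, Fin.ext_iff, apply_ite Fin.val]
    split_ifs <;> omega
  rw [len, hinv]
  simp [Fin.ext_iff]

theorem len_swap_add_two_mul_swap_add_two {N a : ℕ} (h : a + 3 < N) :
    len (swap (⟨a, by omega⟩ : Fin N) ⟨a + 2, by omega⟩ *
      swap (⟨a + 1, by omega⟩ : Fin N) ⟨a + 3, h⟩) = 4 := by
  have hinv : (univ.filter fun p : Fin N × Fin N => p.1 < p.2 ∧
      (swap (⟨a, by omega⟩ : Fin N) ⟨a + 2, by omega⟩ *
        swap (⟨a + 1, by omega⟩ : Fin N) ⟨a + 3, h⟩) p.2 <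
      (swap (⟨a, by omega⟩ : Fin N) ⟨a + 2, by omega⟩ *
        swap (⟨a + 1, by omega⟩ : Fin N) ⟨a + 3, h⟩) p.1)
      = {(⟨a, by omega⟩, ⟨a + 2, by omega⟩), (⟨a, by omega⟩, ⟨a + 3, h⟩),
          (⟨a + 1, by omega⟩, ⟨a + 2, by omega⟩), (⟨a + 1, by omega⟩, ⟨a + 3, h⟩)} := by
    ext ⟨p, q⟩
    simp only [mem_filter, mem_univ, true_and, mem_insert, mem_singleton, Prod.mk.injEq,
      Perm.mul_apply, swap_apply_def, Fin.lt_def, Fin.ext_iff, apply_ite Fin.val]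
    split_ifs <;> omega
  rw [len, hinv]
  simp [Fin.ext_iff]

theorem gen_mul_gen_pred_mul_gen {N a : ℕ} (h : a + 2 < N) :
    gen N (a + 2) * gen N (a + 1) * gen N (a + 2) = swap ⟨a, by omega⟩ ⟨a + 2, h⟩ := by
  rw [gen_succ h, gen_succ (by omega)]
  ext v
  simp only [Perm.mul_apply, swap_apply_def, Fin.ext_iff, apply_ite Fin.val]
  split_ifs <;> omega

theorem gen_mul_gen_succ_mul_gen {N a : ℕ} (h : a + 3 < N) :
    gen N (a + 2) * gen N (a + 3) * gen N (a + 2) = swap ⟨a + 1, by omega⟩ ⟨a + 3, h⟩ := by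
  rw [gen_succ (by omega), gen_succ h]
  ext v
  simp only [Perm.mul_apply, swap_apply_def, Fin.ext_iff, apply_ite Fin.val]
  split_ifs <;> omega

/-- in the Bruhat order on S_n, `c' = s_i s_{i-1} s_{i+1} s_i` is the unique
element covering both `a' = s_i s_{i-1} s_i` and `b' = s_i s_{i+1} s_i`, for 2 ≤ i ≤ n-2. -/
theorem stmt8 (n i : ℕ) (h2 : 2 ≤ i) (hi : i ≤ n - 2) :
    CovByIn bruhatLE Set.univ (gen n i * gen n (i-1) * gen n i)
      (gen n i * gen n (i-1) * gen n (i+1) * gen n i) ∧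
    CovByIn bruhatLE Set.univ (gen n i * gen n (i+1) * gen n i)
      (gen n i * gen n (i-1) * gen n (i+1) * gen n i) ∧
    ∀ c : Equiv.Perm (Fin n),
      CovByIn bruhatLE Set.univ (gen n i * gen n (i-1) * gen n i) c →
      CovByIn bruhatLE Set.univ (gen n i * gen n (i+1) * gen n i) c →
      c = gen n i * gen n (i-1) * gen n (i+1) * gen n i := by
  obtain ⟨a, rfl⟩ : ∃ a, i = a + 2 := ⟨i - 2, by omega⟩
  have h : a + 3 < n := by omega
  have hc : gen n (a + 2) * gen n (a + 1) * gen n (a + 3) * gen n (a + 2) =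
      (gen n (a + 2) * gen n (a + 1) * gen n (a + 2)) *
        (gen n (a + 2) * gen n (a + 3) * gen n (a + 2)) := by
    simp only [mul_assoc, gen_succ (show a + 1 + 1 < n by omega), swap_mul_self_mul]
  simp only [show a + 2 - 1 = a + 1 from rfl, show a + 2 + 1 = a + 3 from rfl, hc,
    gen_mul_gen_pred_mul_gen (show a + 2 < n by omega), gen_mul_gen_succ_mul_gen h]
  exact covByIn_mul_of_disjoint ⟨_, _, by simp [Fin.ext_iff], rfl⟩
    ⟨_, _, by simp [Fin.ext_iff], rfl⟩ (Perm.disjoint_swap_swap (by simp [Fin.ext_iff]))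
    (by rw [len_swap_add_two_mul_swap_add_two h, len_swap_add_two (by omega)])
    (by rw [len_swap_add_two_mul_swap_add_two h, len_swap_add_two h])
end

section
/- For a twisted involution w in S_{2n} (not in ι), there exists at most one twisted identity u such that w covers u in the Bruhat order on twisted involutions. -/
open Equiv

/-!
Left multiplication by `w0` turns twisted involutions into involutions and twisted identities
into fixed-point-free involutions, and it reverses the Bruhat order. So it suffices to show: if an
involution `b` with a fixed point is covered, among involutions, by a fixed-point-free involution
`a`, then `b` has exactly two fixed points `i, j` and `a = b (i j)`.

This goes by induction on the length of `a`. If `a` has a descent `s` with `s a s ≠ a`, the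
operator `σ_s` (`x ↦ x s` if `x` commutes with `s`, `x ↦ s x s` otherwise) carries the cover
`b ⋖ a` to a cover `σ_s b ⋖ σ_s a` of smaller length, by the lifting property for involutions.
Otherwise every descent of `a` commutes with `a`, which forces `a = (0 1)(2 3)⋯`; the tableau
criterion for the Bruhat order (comparison of the counts `#{k ≤ x | y ≤ u k}`) then shows that `b`
fixes a whole pair `{2t, 2t + 1}` and lies below `a (2t 2t+1)`, so that `a = b (2t 2t+1)`.
-/

open Finset

namespace Bruhat
variable {N : ℕ}

/-! ## Length and the tableau criterion -/

def corner (u : Perm (Fin N)) (x y : ℕ) : ℕ :=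
  (univ.filter fun k : Fin N => (k : ℕ) ≤ x ∧ y ≤ (u k : ℕ)).card

def CornerLE (u v : Perm (Fin N)) : Prop := ∀ x y : ℕ, corner u x y ≤ corner v x y

lemma corner_eq_sum (u : Perm (Fin N)) (x y : ℕ) :
    corner u x y = ∑ k : Fin N, if (k : ℕ) ≤ x ∧ y ≤ (u k : ℕ) then 1 else 0 := by
  rw [corner, Finset.card_filter]

lemma corner_mul_swap (u : Perm (Fin N)) (p q : Fin N) (hpq : p ≠ q) (x y : ℕ) :
    corner (u * swap p q) x y
      + ((if (p : ℕ) ≤ x ∧ y ≤ (u p : ℕ) then 1 else 0)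
        + (if (q : ℕ) ≤ x ∧ y ≤ (u q : ℕ) then 1 else 0))
    = corner u x y
      + ((if (q : ℕ) ≤ x ∧ y ≤ (u p : ℕ) then 1 else 0)
        + (if (p : ℕ) ≤ x ∧ y ≤ (u q : ℕ) then 1 else 0)) := by
  have h1 : corner (u * swap p q) x y
      = ∑ k : Fin N, if (swap p q k : ℕ) ≤ x ∧ y ≤ (u k : ℕ) then 1 else 0 := by
    rw [corner_eq_sum]
    exact Fintype.sum_equiv (swap p q) _ _ (fun k => by
      simp [Perm.mul_apply, swap_apply_self]; exact if_congr Iff.rfl rfl rfl)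
  rw [h1, corner_eq_sum]
  rw [← Finset.add_sum_erase (univ) _ (Finset.mem_univ p),
      ← Finset.add_sum_erase ((univ : Finset (Fin N)).erase p) _
        (by simp [Finset.mem_erase, hpq.symm] : q ∈ (univ : Finset (Fin N)).erase p)]
  conv_rhs => rw [← Finset.add_sum_erase (univ) _ (Finset.mem_univ p),
      ← Finset.add_sum_erase ((univ : Finset (Fin N)).erase p) _
        (by simp [Finset.mem_erase, hpq.symm] : q ∈ (univ : Finset (Fin N)).erase p)]
  have hs : ∀ k ∈ (((univ : Finset (Fin N)).erase p).erase q),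
      (if ((swap p q k : Fin N) : ℕ) ≤ x ∧ y ≤ (u k : ℕ) then 1 else 0)
        = (if (k : ℕ) ≤ x ∧ y ≤ (u k : ℕ) then 1 else 0) := by
    intro k hk
    simp only [Finset.mem_erase] at hk
    rw [swap_apply_of_ne_of_ne hk.2.1 hk.1]
  rw [Finset.sum_congr rfl hs, swap_apply_left, swap_apply_right]
  ring

lemma val_swap_apply (K K1 : Fin N) (hne : K ≠ K1) (a : Fin N) :
    ((swap K K1 a : Fin N) : ℕ)
      = if (a : ℕ) = K then (K1 : ℕ) else if (a : ℕ) = K1 then (K : ℕ) else a := by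
  rcases eq_or_ne a K with h | h
  · subst h; rw [swap_apply_left]; simp
  · rcases eq_or_ne a K1 with h2 | h2
    · subst h2
      rw [swap_apply_right, if_neg (fun hh => hne (Fin.ext hh.symm)), if_pos rfl]
    · rw [swap_apply_of_ne_of_ne h h2,
        if_neg (fun hh => h (Fin.ext hh)), if_neg (fun hh => h2 (Fin.ext hh))]

lemma len_mul_swap_of_lt (u : Perm (Fin N)) (K K1 : Fin N) (hadj : (K1 : ℕ) = K + 1)
    (h : u K < u K1) : len (u * swap K K1) = len u + 1 := by
  have hne : K ≠ K1 := fun e => by rw [e] at hadj; omega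
  have hreindex : len (u * swap K K1) = (univ.filter fun q : Fin N × Fin N =>
      swap K K1 q.1 < swap K K1 q.2 ∧ u q.2 < u q.1).card := by
    refine Finset.card_equiv (Equiv.prodCongr (swap K K1) (swap K K1)) fun p => ?_
    rw [Finset.mem_filter, Finset.mem_filter]
    simp only [Finset.mem_univ, true_and, Equiv.prodCongr_apply, Prod.map, Perm.mul_apply,
      swap_apply_self]
  have hset : (univ.filter fun q : Fin N × Fin N =>
      swap K K1 q.1 < swap K K1 q.2 ∧ u q.2 < u q.1) =
      insert (K1, K) (univ.filter fun q : Fin N × Fin N => q.1 < q.2 ∧ u q.2 < u q.1) := by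
    ext ⟨a, b⟩
    rw [Finset.mem_insert, Finset.mem_filter, Finset.mem_filter]
    have hKK1 : K < K1 := Fin.lt_def.mpr (by omega)
    by_cases hab : (a = K1 ∧ b = K) ∨ (a = K ∧ b = K1)
    · rcases hab with ⟨rfl, rfl⟩ | ⟨rfl, rfl⟩ <;>
        simp [swap_apply_left, swap_apply_right, hKK1, h, hne, not_lt_of_gt]
    · simp only [Finset.mem_univ, true_and, Prod.mk.injEq, Fin.lt_def, val_swap_apply K K1 hne]
      simp only [Fin.ext_iff] at hab ⊢
      have := Fin.val_ne_of_ne hne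
      split_ifs <;> omega
  rw [hreindex, hset, Finset.card_insert_of_notMem]
  · rfl
  · rw [Finset.mem_filter]
    simp only [Finset.mem_univ, true_and, Fin.lt_def, not_and]
    omega

lemma len_mul_swap_of_gt (u : Perm (Fin N)) (K K1 : Fin N) (hadj : (K1 : ℕ) = K + 1)
    (h : u K1 < u K) :
    len (u * swap K K1) + 1 = len u := by
  have h2 : (u * swap K K1) K < (u * swap K K1) K1 := by
    simpa [Perm.mul_apply, swap_apply_left, swap_apply_right] using h
  have := len_mul_swap_of_lt (u * swap K K1) K K1 hadj h2
  rw [mul_assoc, swap_mul_self, mul_one] at this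
  omega

/-- The transposition `(P Q)` is the conjugate of `(P Q')` by the adjacent `s = (Q' Q)`, so the
length of `u (P Q) = (u s) (P Q') s` can be bounded through that of `(u s) (P Q')`. -/
lemma len_lt_len_mul_swap_of_conj {u : Perm (Fin N)} {P Q' Q : Fin N} (hadj : (Q : ℕ) = Q' + 1)
    (hPQ' : P < Q') (h : u P < u Q)
    (ih : len (u * swap Q' Q) < len (u * swap Q' Q * swap P Q')) :
    len u < len (u * swap P Q) := by
  have hPQ : P ≠ Q := fun e => by rw [e, Fin.lt_def] at hPQ'; omega
  have hQ'Q : Q' ≠ Q := fun e => by rw [e] at hadj; omega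
  have sP : swap Q' Q P = P := swap_apply_of_ne_of_ne hPQ'.ne hPQ
  have hfact : u * swap P Q = u * swap Q' Q * swap P Q' * swap Q' Q := by
    have h1 := swap_apply_apply (swap Q' Q) P Q'
    rw [sP, swap_apply_left, swap_inv] at h1
    rw [h1]
    group
  set z := u * swap Q' Q * swap P Q'
  have zQ' : z Q' = u P := by
    simp [z, swap_apply_right, sP]
  have zQ : z Q = u Q' := by
    simp [z, swap_apply_of_ne_of_ne hPQ.symm hQ'Q.symm]
  rw [hfact]
  rcases lt_or_gt_of_ne (u.injective.ne hQ'Q) with hC | hC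
  · have hlw := len_mul_swap_of_lt u Q' Q hadj hC
    rcases lt_or_gt_of_ne (u.injective.ne hPQ'.ne) with hA | hA
    · have := len_mul_swap_of_lt z Q' Q hadj (by rw [zQ', zQ]; exact hA)
      omega
    · have := len_mul_swap_of_gt z Q' Q hadj (by rw [zQ', zQ]; exact hA)
      omega
  · have hlw := len_mul_swap_of_gt u Q' Q hadj hC
    have := len_mul_swap_of_lt z Q' Q hadj (by rw [zQ', zQ]; exact h.trans hC)
    omega

lemma len_lt_len_mul_swap (u : Perm (Fin N)) (P Q : Fin N) (hlt : P < Q) (h : u P < u Q) :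
    len u < len (u * swap P Q) := by
  obtain ⟨g, hg⟩ : ∃ g, (Q : ℕ) - P ≤ g := ⟨_, le_rfl⟩
  induction g generalizing u Q with
  | zero => exact absurd hlt (by rw [Fin.lt_def]; omega)
  | succ g ih =>
    have hPQ : (P : ℕ) < Q := hlt
    by_cases hadj : (Q : ℕ) = P + 1
    · rw [len_mul_swap_of_lt u P Q hadj h]
      omega
    set Q' : Fin N := ⟨(Q : ℕ) - 1, by omega⟩
    have hPQ' : P < Q' := Fin.lt_def.mpr (by simp only [Q']; omega)
    refine len_lt_len_mul_swap_of_conj (Q' := Q') (by simp only [Q']; omega) hPQ' h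
      (ih _ Q' hPQ' ?_ (by simp only [Q']; omega))
    simp only [Perm.mul_apply, swap_apply_left,
      swap_apply_of_ne_of_ne hPQ'.ne (Fin.ne_of_lt hlt), h]

lemma len_mul_swap_lt_len (u : Perm (Fin N)) (P Q : Fin N) (hlt : P < Q) (h : u Q < u P) :
    len (u * swap P Q) < len u := by
  have h2 : (u * swap P Q) P < (u * swap P Q) Q := by
    simpa [Perm.mul_apply, swap_apply_left, swap_apply_right] using h
  have := len_lt_len_mul_swap (u * swap P Q) P Q hlt h2
  rwa [mul_assoc, swap_mul_self, mul_one] at this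

lemma apply_lt_apply_of_len_lt (u : Perm (Fin N)) (P Q : Fin N) (hlt : P < Q)
    (h : len u < len (u * swap P Q)) : u P < u Q := by
  rcases lt_trichotomy (u P) (u Q) with h1 | h1 | h1
  · exact h1
  · exact absurd h1 (fun e => (ne_of_lt hlt) (u.injective e))
  · exact absurd (len_mul_swap_lt_len u P Q hlt h1) (by omega)

lemma bruhatLE_mul_of_isSwap {u t : Perm (Fin N)} (ht : t.IsSwap) (h : len u < len (u * t)) :
    bruhatLE u (u * t) := Relation.ReflTransGen.single ⟨t, ht, rfl, h⟩

lemma len_le_len_of_bruhatLE {u v : Perm (Fin N)} (h : bruhatLE u v) : len u ≤ len v := by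
  induction h with
  | refl => exact le_rfl
  | tail _ h2 ih => obtain ⟨t, _, rfl, hl⟩ := h2; omega

lemma bruhatLE_swap_mul_of_isSwap {t z : Perm (Fin N)} (ht : t.IsSwap)
    (h : len (t * z) < len z) : bruhatLE (t * z) z := by
  obtain ⟨i, j, hij, rfl⟩ := ht
  have key : swap i j * z * swap (z⁻¹ i) (z⁻¹ j) = z := by
    rw [swap_apply_apply, inv_inv]
    simp only [mul_assoc, mul_inv_cancel_left, swap_mul_self_mul]
  have := bruhatLE_mul_of_isSwap (u := swap i j * z) ⟨_, _, z⁻¹.injective.ne hij, rfl⟩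
    (by rwa [key])
  rwa [key] at this

lemma cornerLE_mul_swap (u : Perm (Fin N)) (P Q : Fin N) (hlt : P < Q) (h : u P < u Q) :
    CornerLE u (u * swap P Q) := by
  intro x y
  have master := corner_mul_swap u P Q (ne_of_lt hlt) x y
  have h1 : (P : ℕ) < Q := hlt
  have h2 : (u P : ℕ) < u Q := h
  split_ifs at master <;> omega

lemma cornerLE_of_step {u v : Perm (Fin N)}
    (h : ∃ t : Perm (Fin N), t.IsSwap ∧ v = u * t ∧ len u < len v) : CornerLE u v := by
  obtain ⟨t, ⟨i, j, hij, rfl⟩, rfl, hl⟩ := h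
  rcases lt_or_gt_of_ne hij with hij' | hij'
  · exact cornerLE_mul_swap u i j hij' (apply_lt_apply_of_len_lt u i j hij' hl)
  · rw [swap_comm] at hl ⊢
    exact cornerLE_mul_swap u j i hij' (apply_lt_apply_of_len_lt u j i hij' hl)

lemma cornerLE_of_bruhatLE {u v : Perm (Fin N)} (h : bruhatLE u v) : CornerLE u v := by
  induction h with
  | refl => exact fun x y => le_rfl
  | tail _ h2 ih => exact fun x y => (ih x y).trans (cornerLE_of_step h2 x y)

lemma len_inv (w : Perm (Fin N)) : len w⁻¹ = len w := by
  unfold len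
  apply Finset.card_bij' (fun p _ => ((w⁻¹ p.2 : Fin N), (w⁻¹ p.1 : Fin N)))
    (fun p _ => ((w p.2 : Fin N), (w p.1 : Fin N)))
  · intro p hp
    simp only [Finset.mem_filter, Finset.mem_univ, true_and] at hp ⊢
    exact ⟨hp.2, by simpa using hp.1⟩
  · intro p hp
    simp only [Finset.mem_filter, Finset.mem_univ, true_and] at hp ⊢
    exact ⟨hp.2, by simpa using hp.1⟩
  · intro p _; simp
  · intro p _; simp

lemma bruhatLE_inv {u v : Perm (Fin N)} (h : bruhatLE u v) : bruhatLE u⁻¹ v⁻¹ := by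
  induction h with
  | refl => exact .refl
  | @tail b c _ h2 ih =>
    obtain ⟨t, ⟨i, j, hij, rfl⟩, rfl, hl⟩ := h2
    have hc : (b * swap i j * b⁻¹).IsSwap := by
      rw [← swap_apply_apply]
      exact ⟨_, _, fun e => hij (b.injective e), rfl⟩
    have e : (b * swap i j)⁻¹ = b⁻¹ * (b * swap i j * b⁻¹) := by
      rw [mul_inv_rev, swap_inv]; group
    refine .tail ih ⟨b * swap i j * b⁻¹, hc, e, ?_⟩
    rw [len_inv, len_inv]; exact hl

lemma exists_min_apply_ne {u v : Perm (Fin N)} (hne : u ≠ v) :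
    ∃ r : Fin N, u r ≠ v r ∧ ∀ k : Fin N, (k : ℕ) < r → u k = v k := by
  obtain ⟨r, hr, hmin⟩ := wellFounded_lt.has_min {r : Fin N | u r ≠ v r}
    (not_forall.mp (mt Equiv.ext hne))
  exact ⟨r, hr, fun k hk => not_not.mp fun h => hmin k h (Fin.lt_def.mpr hk)⟩

lemma CornerLE.apply_lt_of_min_apply_ne {u v : Perm (Fin N)} (hc : CornerLE u v) (r : Fin N)
    (hne : u r ≠ v r) (hmin : ∀ k : Fin N, (k : ℕ) < (r : ℕ) → u k = v k) :
    (u r : ℕ) < (v r : ℕ) := by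
  by_contra hcon
  have hlt : (v r : ℕ) < u r := by have := Fin.val_ne_of_ne hne; omega
  have hsub : insert r (univ.filter fun k : Fin N => (k : ℕ) ≤ r ∧ (u r : ℕ) ≤ v k)
      ⊆ univ.filter fun k : Fin N => (k : ℕ) ≤ r ∧ (u r : ℕ) ≤ u k := by
    intro k hk
    simp only [Finset.mem_insert, Finset.mem_filter, Finset.mem_univ, true_and] at hk ⊢
    rcases hk with rfl | ⟨hkr, hk⟩
    · exact ⟨le_rfl, le_rfl⟩
    · have hkr' : (k : ℕ) < r := lt_of_le_of_ne hkr fun e => by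
        rw [Fin.ext e] at hk; omega
      exact ⟨hkr, by rwa [hmin k hkr']⟩
  have := Finset.card_le_card hsub
  rw [Finset.card_insert_of_notMem (by simp; omega)] at this
  have := hc r (u r)
  unfold corner at this
  omega

lemma corner_eq_add_card (u : Perm (Fin N)) (x : ℕ) {y z : ℕ} (hyz : y ≤ z) :
    corner u x y = corner u x z +
      (univ.filter fun k : Fin N => (k : ℕ) ≤ x ∧ y ≤ (u k : ℕ) ∧ (u k : ℕ) < z).card := by
  rw [corner, corner, ← Finset.card_union_of_disjoint]
  · congr 1
    ext k
    simp only [Finset.mem_union, Finset.mem_filter, Finset.mem_univ, true_and]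
    omega
  · rw [Finset.disjoint_filter]; intro k _ h1 h2; omega

lemma CornerLE.corner_lt_corner_of_rect {u v : Perm (Fin N)} (hc : CornerLE u v) (r q : Fin N)
    (hur : (u r : ℕ) < (v r : ℕ)) (hpre : ∀ k : Fin N, (k : ℕ) < (r : ℕ) → u k = v k)
    (huq2 : (u q : ℕ) ≤ (v r : ℕ))
    (hmin : ∀ k : Fin N, (r : ℕ) < (k : ℕ) → (k : ℕ) < (q : ℕ) →
      ¬((u r : ℕ) < (u k : ℕ) ∧ (u k : ℕ) ≤ (v r : ℕ)))
    (x y : ℕ) (hx1 : (r : ℕ) ≤ x) (hx2 : x < q) (hy1 : (u r : ℕ) < y) (hy2 : y ≤ (u q : ℕ)) :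
    corner u x y + 1 ≤ corner v x y := by
  have hsub : insert r
        (univ.filter fun k : Fin N => (k : ℕ) ≤ x ∧ y ≤ (u k : ℕ) ∧ (u k : ℕ) < v r + 1) ⊆
      univ.filter fun k : Fin N => (k : ℕ) ≤ x ∧ y ≤ (v k : ℕ) ∧ (v k : ℕ) < v r + 1 := by
    intro k hk
    simp only [Finset.mem_insert, Finset.mem_filter, Finset.mem_univ, true_and] at hk ⊢
    rcases hk with rfl | ⟨hkx, hk⟩
    · omega
    · have hkr : (k : ℕ) < r := by
        rcases lt_trichotomy (k : ℕ) r with h | h | h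
        · exact h
        · rw [Fin.ext h] at hk; omega
        · exact absurd ⟨by omega, by omega⟩ (hmin k h (by omega))
      rw [← hpre k hkr]
      exact ⟨hkx, hk⟩
  have hcard := Finset.card_le_card hsub
  rw [Finset.card_insert_of_notMem (by simp; omega)] at hcard
  rw [corner_eq_add_card u x (show y ≤ v r + 1 by omega),
    corner_eq_add_card v x (show y ≤ v r + 1 by omega)]
  have := hc x (v r + 1)
  omega

def defect (u v : Perm (Fin N)) : ℕ :=
  ∑ p ∈ Finset.range N ×ˢ Finset.range N, (corner v p.1 p.2 - corner u p.1 p.2)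

lemma defect_mul_swap_lt {u v : Perm (Fin N)} {P Q : Fin N} (hPQ : P < Q) (hu : u P < u Q)
    (hc : CornerLE (u * swap P Q) v) : defect (u * swap P Q) v < defect u v := by
  have hle := cornerLE_mul_swap u P Q hPQ hu
  have hstep : corner u P (u Q) < corner (u * swap P Q) P (u Q) := by
    have := corner_mul_swap u P Q hPQ.ne P (u Q)
    have h1 : (P : ℕ) < Q := hPQ
    have h2 : (u P : ℕ) < u Q := hu
    split_ifs at this <;> omega
  apply Finset.sum_lt_sum (fun p _ => by have := hle p.1 p.2; omega)
  refine ⟨((P : ℕ), (u Q : ℕ)), by simp, ?_⟩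
  have := hc P (u Q)
  dsimp only
  omega

lemma exists_min_between {u v : Perm (Fin N)} (r : Fin N) (hur : (u r : ℕ) < v r)
    (hpre : ∀ k : Fin N, (k : ℕ) < r → u k = v k) :
    ∃ q : Fin N, (r : ℕ) < q ∧ (u r : ℕ) < u q ∧ (u q : ℕ) ≤ v r ∧
      ∀ k : Fin N, (r : ℕ) < k → (k : ℕ) < q → ¬((u r : ℕ) < u k ∧ (u k : ℕ) ≤ v r) := by
  have hval : u (u⁻¹ (v r)) = v r := u.apply_symm_apply (v r)
  have hne : u⁻¹ (v r) ≠ r := fun e => hur.ne (by rw [← hval, e])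
  have hgt : ¬((u⁻¹ (v r) : Fin N) : ℕ) < r := fun hlt =>
    hne (v.injective (by rw [← hpre _ hlt, hval]))
  obtain ⟨q, ⟨hrq, hq⟩, hmin⟩ := wellFounded_lt.has_min
    {k : Fin N | (r : ℕ) < k ∧ (u r : ℕ) < u k ∧ (u k : ℕ) ≤ v r}
    ⟨u⁻¹ (v r), by have := Fin.val_ne_of_ne hne; simp only [Set.mem_ofPred_eq, hval]; omega⟩
  exact ⟨q, hrq, hq.1, hq.2, fun k h1 h2 hk => hmin k ⟨h1, hk⟩ (Fin.lt_def.mpr h2)⟩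

/-- The converse direction of the tableau criterion, one transposition at a time. -/
lemma CornerLE.exists_mul_swap {u v : Perm (Fin N)} (hc : CornerLE u v) (hne : u ≠ v) :
    ∃ P Q : Fin N, P < Q ∧ u P < u Q ∧ CornerLE (u * swap P Q) v := by
  obtain ⟨r, hr, hrmin⟩ := exists_min_apply_ne hne
  have hur := hc.apply_lt_of_min_apply_ne r hr hrmin
  obtain ⟨q, hrq, huq1, huq2, hqmin⟩ := exists_min_between r hur hrmin
  refine ⟨r, q, hrq, huq1, fun x y => ?_⟩
  have master := corner_mul_swap u r q (Fin.ne_of_lt hrq) x y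
  by_cases hrect : (r : ℕ) ≤ x ∧ x < q ∧ (u r : ℕ) < y ∧ y ≤ u q
  · have := hc.corner_lt_corner_of_rect r q hur hrmin huq2 hqmin x y
      hrect.1 hrect.2.1 hrect.2.2.1 hrect.2.2.2
    split_ifs at master <;> omega
  · have hle := hc x y
    push Not at hrect
    split_ifs at master <;> omega

lemma bruhatLE_of_cornerLE {u v : Perm (Fin N)} (hc : CornerLE u v) : bruhatLE u v := by
  induction hd : defect u v using Nat.strong_induction_on generalizing u with
  | _ m ih =>
  rcases eq_or_ne u v with rfl | hne
  · exact .refl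
  obtain ⟨P, Q, hPQ, hu, hc'⟩ := hc.exists_mul_swap hne
  exact (bruhatLE_mul_of_isSwap ⟨P, Q, hPQ.ne, rfl⟩ (len_lt_len_mul_swap u P Q hPQ hu)).trans
    (ih _ (hd ▸ defect_mul_swap_lt hPQ hu hc') hc' rfl)

def cornerLT (u : Perm (Fin N)) (x y : ℕ) : ℕ :=
  (univ.filter fun k : Fin N => (k : ℕ) < x ∧ y ≤ (u k : ℕ)).card

lemma CornerLE.cornerLT_le {u w : Perm (Fin N)} (h : CornerLE u w) (x y : ℕ) :
    cornerLT u x y ≤ cornerLT w x y := by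
  rcases Nat.eq_zero_or_pos x with rfl | hx
  · simp [cornerLT]
  · have key : ∀ v : Perm (Fin N), cornerLT v x y = corner v (x - 1) y := fun v => by
      unfold corner cornerLT
      congr 1; ext k; simp only [Finset.mem_filter, Finset.mem_univ, true_and]
      exact and_congr_left fun _ => by omega
    rw [key, key]
    exact h _ y

lemma card_filter_le_eq (p : Fin N → Prop) [DecidablePred p] (X : Fin N) (x : ℕ)
    (hX : (X : ℕ) = x) :
    (univ.filter fun k : Fin N => (k : ℕ) ≤ x ∧ p k).card
      = (univ.filter fun k : Fin N => (k : ℕ) < x ∧ p k).card + if p X then 1 else 0 := by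
  split_ifs with h
  · rw [← Finset.card_insert_of_notMem (a := X) (by simp [hX])]
    congr 1; ext k
    simp only [Finset.mem_insert, Finset.mem_filter, Finset.mem_univ, true_and]
    rcases eq_or_ne k X with rfl | hk
    · simp [hX, h]
    · have := Fin.val_ne_of_ne hk
      simp only [hk, false_or]
      exact and_congr_left fun _ => by omega
  · rw [add_zero]; congr 1; ext k
    simp only [Finset.mem_filter, Finset.mem_univ, true_and]
    rcases eq_or_ne k X with rfl | hk
    · simp [h]
    · have := Fin.val_ne_of_ne hk
      exact and_congr_left fun _ => by omega

lemma corner_eq_cornerLT_add (u : Perm (Fin N)) (X : Fin N) (y : ℕ) :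
    corner u X y = cornerLT u X y + if y ≤ (u X : ℕ) then 1 else 0 :=
  card_filter_le_eq _ X X rfl

/-! ## The lifting property

For an adjacent transposition `s = (K K1)` only the row `x = K` of the corner counts of `u s`
differs from that of `u`, and it is squeezed between the rows `K - 1` and `K + 1`. -/

section Adjacent
variable (K K1 : Fin N)

lemma ne_of_adjacent (hadj : (K1 : ℕ) = K + 1) : K ≠ K1 := fun e => by rw [e] at hadj; omega

lemma corner_succ_of_adjacent (hadj : (K1 : ℕ) = K + 1) (u : Perm (Fin N)) (y : ℕ) :
    corner u (K + 1) y = corner u K y + if y ≤ (u K1 : ℕ) then 1 else 0 := by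
  rw [corner, card_filter_le_eq _ K1 _ hadj]
  congr 2; ext k; simp only [Finset.mem_filter, Finset.mem_univ, true_and]
  exact and_congr_left fun _ => by omega

lemma corner_mul_swap_of_ne (hadj : (K1 : ℕ) = K + 1) (u : Perm (Fin N)) (x y : ℕ)
    (hx : x ≠ K) : corner (u * swap K K1) x y = corner u x y := by
  have master := corner_mul_swap u K K1 (ne_of_adjacent K K1 hadj) x y
  split_ifs at master <;> omega

lemma cornerLT_mul_swap (hadj : (K1 : ℕ) = K + 1) (u : Perm (Fin N)) (y : ℕ) :
    cornerLT (u * swap K K1) K y = cornerLT u K y := by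
  unfold cornerLT
  congr 1; ext k; simp only [Finset.mem_filter, Finset.mem_univ, true_and]
  refine and_congr_right fun hk => ?_
  rw [Perm.mul_apply, swap_apply_of_ne_of_ne (Fin.ne_of_lt hk)
    (fun e => by rw [e] at hk; omega)]

lemma corner_mul_swap_self (hadj : (K1 : ℕ) = K + 1) (u : Perm (Fin N)) (y : ℕ) :
    corner (u * swap K K1) K y = cornerLT u K y + if y ≤ (u K1 : ℕ) then 1 else 0 := by
  rw [corner_eq_cornerLT_add, cornerLT_mul_swap K K1 hadj, Perm.mul_apply,
    swap_apply_left]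

lemma CornerLE.mul_swap_left (hadj : (K1 : ℕ) = K + 1) {u w : Perm (Fin N)}
    (hdw : (w K1 : ℕ) < w K) (h : CornerLE u w) : CornerLE (u * swap K K1) w := by
  intro x y
  by_cases hx : x = K
  · subst hx
    have e1 := corner_mul_swap_self K K1 hadj u y
    have e2 := corner_eq_cornerLT_add u K y
    have e3 := corner_eq_cornerLT_add w K y
    have e4 := corner_succ_of_adjacent K K1 hadj u y
    have e5 := corner_succ_of_adjacent K K1 hadj w y
    have hK := h K y
    have hK1 := h (K + 1) y
    have hpre := h.cornerLT_le K y
    split_ifs at * <;> omega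
  · rw [corner_mul_swap_of_ne K K1 hadj u x y hx]
    exact h x y

lemma CornerLE.mul_swap_mul_swap (hadj : (K1 : ℕ) = K + 1) {u w : Perm (Fin N)}
    (hdu : (u K1 : ℕ) < u K) (h : CornerLE u w) :
    CornerLE (u * swap K K1) (w * swap K K1) := by
  intro x y
  by_cases hx : x = K
  · subst hx
    have e1 := corner_mul_swap_self K K1 hadj u y
    have e2 := corner_mul_swap_self K K1 hadj w y
    have e3 := corner_eq_cornerLT_add u K y
    have e4 := corner_eq_cornerLT_add w K y
    have e5 := corner_succ_of_adjacent K K1 hadj u y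
    have e6 := corner_succ_of_adjacent K K1 hadj w y
    have hK := h K y
    have hK1 := h (K + 1) y
    have hpre := h.cornerLT_le K y
    split_ifs at * <;> omega
  · rw [corner_mul_swap_of_ne K K1 hadj u x y hx, corner_mul_swap_of_ne K K1 hadj w x y hx]
    exact h x y

lemma CornerLE.mul_swap_right (hadj : (K1 : ℕ) = K + 1) {u w : Perm (Fin N)}
    (hdu : (u K : ℕ) < u K1) (h : CornerLE u w) : CornerLE u (w * swap K K1) := by
  intro x y
  by_cases hx : x = K
  · subst hx
    have e1 := corner_mul_swap_self K K1 hadj w y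
    have e2 := corner_eq_cornerLT_add u K y
    have e3 := corner_eq_cornerLT_add w K y
    have e4 := corner_succ_of_adjacent K K1 hadj u y
    have e5 := corner_succ_of_adjacent K K1 hadj w y
    have hK := h K y
    have hK1 := h (K + 1) y
    have hpre := h.cornerLT_le K y
    split_ifs at * <;> omega
  · rw [corner_mul_swap_of_ne K K1 hadj w x y hx]
    exact h x y

lemma CornerLE.mul_swap_left_of_le_mul_swap (hadj : (K1 : ℕ) = K + 1) {u w : Perm (Fin N)}
    (hdw : (w K1 : ℕ) < w K) (h : CornerLE u (w * swap K K1)) :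
    CornerLE (u * swap K K1) w := by
  intro x y
  by_cases hx : x = K
  · subst hx
    have e1 := corner_mul_swap_self K K1 hadj u y
    have e2 := corner_mul_swap_self K K1 hadj w y
    have e3 := corner_eq_cornerLT_add u K y
    have e4 := corner_eq_cornerLT_add w K y
    have e5 := corner_succ_of_adjacent K K1 hadj u y
    have e6 := corner_succ_of_adjacent K K1 hadj w y
    have e7 := corner_mul_swap_of_ne K K1 hadj w (K + 1) y (by omega)
    have hK := h K y
    have hK1 := h (K + 1) y
    have hpre := h.cornerLT_le K y
    rw [cornerLT_mul_swap K K1 hadj w y] at hpre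
    split_ifs at * <;> omega
  · rw [corner_mul_swap_of_ne K K1 hadj u x y hx]
    have := h x y
    rwa [corner_mul_swap_of_ne K K1 hadj w x y hx] at this

lemma mul_swap_le_of_le (hadj : (K1 : ℕ) = K + 1) {u w : Perm (Fin N)}
    (hdw : (w K1 : ℕ) < w K) (h : bruhatLE u w) : bruhatLE (u * swap K K1) w :=
  bruhatLE_of_cornerLE ((cornerLE_of_bruhatLE h).mul_swap_left K K1 hadj hdw)

lemma mul_swap_le_mul_swap (hadj : (K1 : ℕ) = K + 1) {u w : Perm (Fin N)}
    (hdu : (u K1 : ℕ) < u K) (h : bruhatLE u w) :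
    bruhatLE (u * swap K K1) (w * swap K K1) :=
  bruhatLE_of_cornerLE ((cornerLE_of_bruhatLE h).mul_swap_mul_swap K K1 hadj hdu)

lemma le_mul_swap_of_le (hadj : (K1 : ℕ) = K + 1) {u w : Perm (Fin N)}
    (hdu : (u K : ℕ) < u K1) (h : bruhatLE u w) : bruhatLE u (w * swap K K1) :=
  bruhatLE_of_cornerLE ((cornerLE_of_bruhatLE h).mul_swap_right K K1 hadj hdu)

lemma mul_swap_le_of_le_mul_swap (hadj : (K1 : ℕ) = K + 1) {u w : Perm (Fin N)}
    (hdw : (w K1 : ℕ) < w K) (h : bruhatLE u (w * swap K K1)) :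
    bruhatLE (u * swap K K1) w :=
  bruhatLE_of_cornerLE ((cornerLE_of_bruhatLE h).mul_swap_left_of_le_mul_swap K K1 hadj hdw)

lemma inv_mul_swap_inv (u : Perm (Fin N)) : (u⁻¹ * swap K K1)⁻¹ = swap K K1 * u := by
  rw [mul_inv_rev, swap_inv, inv_inv]

lemma swap_mul_le_of_le (hadj : (K1 : ℕ) = K + 1) {u w : Perm (Fin N)}
    (hdw : (w⁻¹ K1 : ℕ) < w⁻¹ K) (h : bruhatLE u w) : bruhatLE (swap K K1 * u) w := by
  simpa [inv_mul_swap_inv] using bruhatLE_inv (mul_swap_le_of_le K K1 hadj hdw (bruhatLE_inv h))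

lemma swap_mul_le_swap_mul (hadj : (K1 : ℕ) = K + 1) {u w : Perm (Fin N)}
    (hdu : (u⁻¹ K1 : ℕ) < u⁻¹ K) (h : bruhatLE u w) :
    bruhatLE (swap K K1 * u) (swap K K1 * w) := by
  simpa [inv_mul_swap_inv] using
    bruhatLE_inv (mul_swap_le_mul_swap K K1 hadj hdu (bruhatLE_inv h))

lemma le_swap_mul_of_le (hadj : (K1 : ℕ) = K + 1) {u w : Perm (Fin N)}
    (hdu : (u⁻¹ K : ℕ) < u⁻¹ K1) (h : bruhatLE u w) : bruhatLE u (swap K K1 * w) := by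
  simpa [inv_mul_swap_inv] using bruhatLE_inv (le_mul_swap_of_le K K1 hadj hdu (bruhatLE_inv h))

lemma len_swap_mul_of_gt (hadj : (K1 : ℕ) = K + 1) (z : Perm (Fin N))
    (h : (z⁻¹ K1 : ℕ) < z⁻¹ K) : len (swap K K1 * z) + 1 = len z := by
  have h1 : len (swap K K1 * z) = len (z⁻¹ * swap K K1) := by
    rw [← len_inv (swap K K1 * z), mul_inv_rev, swap_inv]
  rw [h1, len_mul_swap_of_gt z⁻¹ K K1 hadj (Fin.lt_def.mpr h), len_inv]

lemma swap_conj_eq_iff (hadj : (K1 : ℕ) = K + 1) (x : Perm (Fin N)) :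
    swap K K1 * x * swap K K1 = x ↔
      (x K = K ∧ x K1 = K1) ∨ (x K = K1 ∧ x K1 = K) := by
  constructor
  · intro h
    have hK : swap K K1 (x K1) = x K := by
      simpa using congrArg (· K) h
    by_cases h1 : x K1 = K
    · exact .inr ⟨by rw [← hK, h1, swap_apply_left], h1⟩
    by_cases h2 : x K1 = K1
    · exact .inl ⟨by rw [← hK, h2, swap_apply_right], h2⟩
    rw [swap_apply_of_ne_of_ne h1 h2] at hK
    exact absurd (x.injective hK) (ne_of_adjacent K K1 hadj).symm
  · intro h
    have hxs : x * swap K K1 = swap K K1 * x := by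
      rw [Equiv.mul_swap_eq_swap_mul]
      rcases h with ⟨h1, h2⟩ | ⟨h1, h2⟩ <;> simp [h1, h2, swap_comm]
    rw [mul_assoc, hxs, ← mul_assoc, swap_mul_self, one_mul]

/-! ## The operators `sigma` on involutions -/

/-- Under `x ↦ w0 * x` this is the action `sact` on twisted involutions. -/
noncomputable def sigma (x : Perm (Fin N)) : Perm (Fin N) := by
  classical
  exact if swap K K1 * x * swap K K1 = x then x * swap K K1
    else swap K K1 * x * swap K K1

lemma sigma_of_conj_eq {x : Perm (Fin N)} (h : swap K K1 * x * swap K K1 = x) :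
    sigma K K1 x = x * swap K K1 := by
  unfold sigma; rw [if_pos h]

lemma sigma_of_conj_ne {x : Perm (Fin N)} (h : ¬swap K K1 * x * swap K K1 = x) :
    sigma K K1 x = swap K K1 * (x * swap K K1) := by
  unfold sigma; rw [if_neg h, mul_assoc]

lemma sigma_sigma (x : Perm (Fin N)) : sigma K K1 (sigma K K1 x) = x := by
  have hss : swap K K1 * swap K K1 = 1 := swap_mul_self K K1
  by_cases h : swap K K1 * x * swap K K1 = x
  · have h2 : swap K K1 * (x * swap K K1) * swap K K1 = x * swap K K1 := by
      rw [← mul_assoc, h]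
    rw [sigma_of_conj_eq K K1 h, sigma_of_conj_eq K K1 h2, mul_assoc, hss, mul_one]
  · have hx : swap K K1 * (swap K K1 * (x * swap K K1)) * swap K K1 = x := by
      simp only [← mul_assoc, hss, one_mul]; rw [mul_assoc, hss, mul_one]
    have h2 : ¬swap K K1 * (swap K K1 * (x * swap K K1)) * swap K K1
        = swap K K1 * (x * swap K K1) := by
      rw [hx]; intro e; exact h (by rw [mul_assoc, ← e])
    rw [sigma_of_conj_ne K K1 h, sigma_of_conj_ne K K1 h2, ← mul_assoc, hx]

lemma apply_apply_of_mul_self {x : Perm (Fin N)} (hx : x * x = 1) (m : Fin N) : x (x m) = m := by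
  simpa using Equiv.ext_iff.mp hx m

lemma sigma_mul_self {x : Perm (Fin N)} (hx : x * x = 1) : sigma K K1 x * sigma K K1 x = 1 := by
  by_cases h : swap K K1 * x * swap K K1 = x
  · rw [sigma_of_conj_eq K K1 h]
    calc x * swap K K1 * (x * swap K K1)
        = x * (swap K K1 * x * swap K K1) := by group
      _ = 1 := by rw [h, hx]
  · rw [sigma_of_conj_ne K K1 h]
    calc swap K K1 * (x * swap K K1) * (swap K K1 * (x * swap K K1))
        = swap K K1 * x * (swap K K1 * swap K K1) * x * swap K K1 := by
          group
      _ = 1 := by rw [swap_mul_self, mul_one, mul_assoc _ x x, hx, mul_one,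
          swap_mul_self]

/-- When `x` does not commute with `s = (K K1)`, conjugating by `s` keeps `x K` and `x K1`
off `{K, K1}`, so `s` does not change their relative order. -/
lemma swap_apply_lt_swap_apply_iff (hadj : (K1 : ℕ) = K + 1) {x : Perm (Fin N)}
    (hx : x * x = 1) (hn : ¬swap K K1 * x * swap K K1 = x) :
    ((swap K K1 (x K) : ℕ) < swap K K1 (x K1)) ↔ ((x K : ℕ) < x K1) := by
  rw [swap_conj_eq_iff K K1 hadj] at hn
  have hne := ne_of_adjacent K K1 hadj
  have f1 : x K ≠ K1 := fun e => hn (.inr ⟨e, by rw [← e, apply_apply_of_mul_self hx]⟩)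
  have f2 : x K1 ≠ K := fun e => hn (.inr ⟨by rw [← e, apply_apply_of_mul_self hx], e⟩)
  have f3 : ¬(x K = K ∧ x K1 = K1) := fun e => hn (.inl e)
  have hvne := Fin.val_ne_of_ne (x.injective.ne hne)
  have := Fin.val_ne_of_ne f1
  have := Fin.val_ne_of_ne f2
  rw [val_swap_apply K K1 hne, val_swap_apply K K1 hne]
  simp only [Fin.ext_iff] at f3
  split_ifs <;> omega

lemma sigma_descent_iff (hadj : (K1 : ℕ) = K + 1) {x : Perm (Fin N)} (hx : x * x = 1) :
    ((sigma K K1 x K1 : ℕ) < sigma K K1 x K) ↔ ((x K : ℕ) < x K1) := by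
  by_cases h : swap K K1 * x * swap K K1 = x
  · rw [sigma_of_conj_eq K K1 h, Perm.mul_apply, Perm.mul_apply,
      swap_apply_left, swap_apply_right]
  · rw [sigma_of_conj_ne K K1 h, Perm.mul_apply, Perm.mul_apply,
      Perm.mul_apply, Perm.mul_apply, swap_apply_left, swap_apply_right,
      swap_apply_lt_swap_apply_iff K K1 hadj hx h]

lemma inv_mul_swap_descent (hadj : (K1 : ℕ) = K + 1) {x : Perm (Fin N)} (hx : x * x = 1)
    (h : ¬swap K K1 * x * swap K K1 = x) (hd : (x K1 : ℕ) < x K) :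
    ((x * swap K K1)⁻¹ K1 : ℕ) < (x * swap K K1)⁻¹ K := by
  rw [mul_inv_rev, swap_inv, inv_eq_of_mul_eq_one_right hx, Perm.mul_apply,
    Perm.mul_apply]
  have hne := Fin.val_ne_of_ne ((swap K K1).injective.ne (x.injective.ne
    (ne_of_adjacent K K1 hadj)))
  have := (swap_apply_lt_swap_apply_iff K K1 hadj hx h).not.mpr (by omega)
  omega

lemma sigma_le_mul_swap_of_descent (hadj : (K1 : ℕ) = K + 1) {x : Perm (Fin N)}
    (hx : x * x = 1) (hd : (x K1 : ℕ) < x K) :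
    bruhatLE (sigma K K1 x) (x * swap K K1) := by
  by_cases h : swap K K1 * x * swap K K1 = x
  · rw [sigma_of_conj_eq K K1 h]
    exact .refl
  · rw [sigma_of_conj_ne K K1 h]
    exact bruhatLE_swap_mul_of_isSwap ⟨K, K1, ne_of_adjacent K K1 hadj, rfl⟩
      (by have := len_swap_mul_of_gt K K1 hadj _ (inv_mul_swap_descent K K1 hadj hx h hd); omega)

lemma len_sigma_lt_of_descent (hadj : (K1 : ℕ) = K + 1) {x : Perm (Fin N)} (hx : x * x = 1)
    (hd : (x K1 : ℕ) < x K) : len (sigma K K1 x) < len x := by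
  have h1 := len_le_len_of_bruhatLE (sigma_le_mul_swap_of_descent K K1 hadj hx hd)
  have h2 := len_mul_swap_of_gt x K K1 hadj (Fin.lt_def.mpr hd)
  omega

lemma mul_swap_le_of_descent (hadj : (K1 : ℕ) = K + 1) {x : Perm (Fin N)}
    (hd : (x K1 : ℕ) < x K) : bruhatLE (x * swap K K1) x := by
  have h := bruhatLE_mul_of_isSwap (u := x * swap K K1) ⟨K, K1, ne_of_adjacent K K1 hadj, rfl⟩
    (by rw [mul_assoc, swap_mul_self, mul_one]
        have := len_mul_swap_of_gt x K K1 hadj (Fin.lt_def.mpr hd); omega)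
  rwa [mul_assoc, swap_mul_self, mul_one] at h

lemma sigma_le_of_descent (hadj : (K1 : ℕ) = K + 1) {x : Perm (Fin N)} (hx : x * x = 1)
    (hd : (x K1 : ℕ) < x K) : bruhatLE (sigma K K1 x) x :=
  (sigma_le_mul_swap_of_descent K K1 hadj hx hd).trans (mul_swap_le_of_descent K K1 hadj hd)

lemma len_lt_len_sigma_of_ascent (hadj : (K1 : ℕ) = K + 1) {x : Perm (Fin N)} (hx : x * x = 1)
    (ha : (x K : ℕ) < x K1) : len x < len (sigma K K1 x) := by
  simpa [sigma_sigma] using len_sigma_lt_of_descent K K1 hadj (sigma_mul_self K K1 hx)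
    ((sigma_descent_iff K K1 hadj hx).mpr ha)

lemma le_sigma_of_ascent (hadj : (K1 : ℕ) = K + 1) {x : Perm (Fin N)} (hx : x * x = 1)
    (ha : (x K : ℕ) < x K1) : bruhatLE x (sigma K K1 x) := by
  simpa [sigma_sigma] using sigma_le_of_descent K K1 hadj (sigma_mul_self K K1 hx)
    ((sigma_descent_iff K K1 hadj hx).mpr ha)

lemma sigma_le_of_le_sigma (hadj : (K1 : ℕ) = K + 1) {x y : Perm (Fin N)} (hy : y * y = 1)
    (hdy : (y K1 : ℕ) < y K) (h : bruhatLE x (sigma K K1 y)) : bruhatLE (sigma K K1 x) y := by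
  have hxs : bruhatLE (x * swap K K1) y := mul_swap_le_of_le_mul_swap K K1 hadj hdy
    (h.trans (sigma_le_mul_swap_of_descent K K1 hadj hy hdy))
  by_cases hcx : swap K K1 * x * swap K K1 = x
  · rwa [sigma_of_conj_eq K K1 hcx]
  · rw [sigma_of_conj_ne K K1 hcx]
    exact swap_mul_le_of_le K K1 hadj (by rwa [inv_eq_of_mul_eq_one_right hy]) hxs

lemma sigma_le_sigma_of_not_le_sigma (hadj : (K1 : ℕ) = K + 1) {x y : Perm (Fin N)}
    (hx : x * x = 1) (hxy : bruhatLE x y)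
    (hnot : ¬bruhatLE x (sigma K K1 y)) : bruhatLE (sigma K K1 x) (sigma K K1 y) := by
  have hxK := Fin.val_ne_of_ne (x.injective.ne (ne_of_adjacent K K1 hadj))
  rcases lt_or_gt_of_ne hxK with hxa | hxd
  · refine absurd ?_ hnot
    have h1 := le_mul_swap_of_le K K1 hadj hxa hxy
    by_cases hcy : swap K K1 * y * swap K K1 = y
    · rwa [sigma_of_conj_eq K K1 hcy]
    · rw [sigma_of_conj_ne K K1 hcy]
      exact le_swap_mul_of_le K K1 hadj (by rwa [inv_eq_of_mul_eq_one_right hx]) h1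
  have h2 := mul_swap_le_mul_swap K K1 hadj hxd hxy
  by_cases hcy : swap K K1 * y * swap K K1 = y
  · rw [sigma_of_conj_eq K K1 hcy]
    exact (sigma_le_mul_swap_of_descent K K1 hadj hx hxd).trans h2
  rw [sigma_of_conj_ne K K1 hcy]
  by_cases hcx : swap K K1 * x * swap K K1 = x
  · rw [sigma_of_conj_eq K K1 hcx]
    refine le_swap_mul_of_le K K1 hadj ?_ h2
    rcases (swap_conj_eq_iff K K1 hadj x).mp hcx with ⟨e1, e2⟩ | ⟨e1, e2⟩
    · rw [e1, e2] at hxd; omega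
    · rw [mul_inv_rev, swap_inv, inv_eq_of_mul_eq_one_right hx, Perm.mul_apply,
        Perm.mul_apply, e1, e2, swap_apply_right, swap_apply_left]
      omega
  · rw [sigma_of_conj_ne K K1 hcx]
    exact swap_mul_le_swap_mul K K1 hadj (inv_mul_swap_descent K K1 hadj hx hcx hxd) h2

lemma sigma_le_sigma_of_not_sigma_le (hadj : (K1 : ℕ) = K + 1) {x z : Perm (Fin N)}
    (hx : x * x = 1) (hz : z * z = 1) (hxz : bruhatLE x z) (hnot : ¬bruhatLE (sigma K K1 x) z) :
    bruhatLE (sigma K K1 x) (sigma K K1 z) := by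
  have hzK := Fin.val_ne_of_ne (z.injective.ne (ne_of_adjacent K K1 hadj))
  rcases lt_or_gt_of_ne hzK with hza | hzd
  · exact sigma_le_of_le_sigma K K1 hadj (sigma_mul_self K K1 hz)
      ((sigma_descent_iff K K1 hadj hz).mpr hza) (by rwa [sigma_sigma])
  · by_cases h2 : bruhatLE x (sigma K K1 z)
    · exact absurd (sigma_le_of_le_sigma K K1 hadj hz hzd h2) hnot
    · exact sigma_le_sigma_of_not_le_sigma K K1 hadj hx hxz h2

/-! ## Covers among involutions -/

def InvolCovBy (b a : Perm (Fin N)) : Prop :=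
  bruhatLE b a ∧ b ≠ a ∧
    ∀ z, z * z = 1 → bruhatLE b z → bruhatLE z a → z = b ∨ z = a

lemma sigma_apply_ne_self {a : Perm (Fin N)} (hnc : ¬swap K K1 * a * swap K K1 = a)
    (hfpf : ∀ m, a m ≠ m) (m : Fin N) : sigma K K1 a m ≠ m := by
  rw [sigma_of_conj_ne K K1 hnc]
  intro h
  apply hfpf (swap K K1 m)
  simpa [Perm.mul_apply, swap_apply_self] using congrArg (swap K K1) h

lemma exists_sigma_apply_eq_self (hadj : (K1 : ℕ) = K + 1) {b : Perm (Fin N)}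
    (hdb : (b K1 : ℕ) < b K) (hbf : ∃ f, b f = f) : ∃ f, sigma K K1 b f = f := by
  obtain ⟨f, hf⟩ := hbf
  by_cases hcb : swap K K1 * b * swap K K1 = b
  · rcases (swap_conj_eq_iff K K1 hadj b).mp hcb with ⟨e1, e2⟩ | ⟨e1, e2⟩
    · rw [e1, e2] at hdb
      omega
    · exact ⟨K, by rw [sigma_of_conj_eq K K1 hcb, Perm.mul_apply, swap_apply_left, e2]⟩
  · exact ⟨swap K K1 f, by simp [sigma_of_conj_ne K K1 hcb, Perm.mul_apply, hf]⟩

lemma InvolCovBy.map_sigma (hadj : (K1 : ℕ) = K + 1) {a b : Perm (Fin N)} (ha : a * a = 1)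
    (hb : b * b = 1) (hfpf : ∀ m, a m ≠ m) (hbf : ∃ f, b f = f) (hda : (a K1 : ℕ) < a K)
    (hnc : ¬swap K K1 * a * swap K K1 = a) (hcov : InvolCovBy b a) :
    (b K1 : ℕ) < b K ∧ InvolCovBy (sigma K K1 b) (sigma K K1 a) := by
  obtain ⟨hba, -, hmin⟩ := hcov
  have hσa := sigma_mul_self K K1 ha
  have hlen := len_sigma_lt_of_descent K K1 hadj ha hda
  have hσa_le := sigma_le_of_descent K K1 hadj ha hda
  have hfpf' := sigma_apply_ne_self K K1 hnc hfpf
  have hnle : ¬bruhatLE b (sigma K K1 a) := fun h => by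
    rcases hmin _ hσa h hσa_le with he | he
    · obtain ⟨f, hf⟩ := hbf
      exact hfpf' f (by rw [he]; exact hf)
    · rw [he] at hlen
      exact lt_irrefl _ hlen
  have hσle := sigma_le_sigma_of_not_le_sigma K K1 hadj hb hba hnle
  have hdb : (b K1 : ℕ) < b K := by
    have hbK := Fin.val_ne_of_ne (b.injective.ne (ne_of_adjacent K K1 hadj))
    refine (lt_or_gt_of_ne hbK).resolve_left fun hasc => ?_
    have h1 := len_lt_len_sigma_of_ascent K K1 hadj hb hasc
    have h2 := len_le_len_of_bruhatLE hσle
    rcases hmin _ (sigma_mul_self K K1 hb) (le_sigma_of_ascent K K1 hadj hb hasc)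
      (hσle.trans hσa_le) with he | he
    · rw [he] at h1
      exact lt_irrefl _ h1
    · rw [he] at h2
      omega
  refine ⟨hdb, hσle, fun he => ?_, fun z hz h1 h2 => ?_⟩
  · obtain ⟨f, hf⟩ := exists_sigma_apply_eq_self K K1 hadj hdb hbf
    exact hfpf' f (he ▸ hf)
  · have hbz : bruhatLE b (sigma K K1 z) := by
      simpa [sigma_sigma] using sigma_le_sigma_of_not_sigma_le K K1 hadj (sigma_mul_self K K1 hb)
        hz h1 (by rw [sigma_sigma]; exact fun h => hnle (h.trans h2))
    rcases hmin _ (sigma_mul_self K K1 hz) hbz (sigma_le_of_le_sigma K K1 hadj ha hda h2)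
      with he | he
    · left
      rw [← sigma_sigma K K1 z, he]
    · right
      rw [← sigma_sigma K K1 z, he]

lemma eq_mul_swap_of_sigma (hadj : (K1 : ℕ) = K + 1) {a b : Perm (Fin N)}
    (hnc : ¬swap K K1 * a * swap K K1 = a) (hdb : (b K1 : ℕ) < b K)
    (hbf : ∃ f, b f = f) {i j : Fin N} (hij : i ≠ j)
    (hfix : ∀ m, sigma K K1 b m = m ↔ m = i ∨ m = j)
    (heq : sigma K K1 a = sigma K K1 b * swap i j) :
    ∃ i j : Fin N, i ≠ j ∧ (∀ m, b m = m ↔ m = i ∨ m = j) ∧ a = b * swap i j := by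
  have hne := ne_of_adjacent K K1 hadj
  have hcb : ¬swap K K1 * b * swap K K1 = b := by
    intro hcb
    obtain ⟨f, hf⟩ := hbf
    rcases (swap_conj_eq_iff K K1 hadj b).mp hcb with ⟨e1, e2⟩ | ⟨e1, e2⟩
    · rw [e1, e2] at hdb
      omega
    have hfK : f ≠ K := fun e => by subst e; exact hne (hf.symm.trans e1)
    have hfK1 : f ≠ K1 := fun e => by subst e; exact hne (e2.symm.trans hf)
    have hσb : ∀ m, m = K ∨ m = K1 ∨ m = f → sigma K K1 b m = m := by
      intro m hm
      rw [sigma_of_conj_eq K K1 hcb, Perm.mul_apply]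
      rcases hm with h | h | h <;> rw [h]
      · rw [swap_apply_left, e2]
      · rw [swap_apply_right, e1]
      · rw [swap_apply_of_ne_of_ne hfK hfK1, hf]
    -- three distinct fixed points of `sigma b` cannot lie in `{i, j}`
    rcases (hfix K).mp (hσb K (.inl rfl)) with rfl | rfl <;>
    rcases (hfix K1).mp (hσb K1 (.inr (.inl rfl))) with h1 | h1 <;>
    rcases (hfix f).mp (hσb f (.inr (.inr rfl))) with h2 | h2 <;>
    simp_all
  refine ⟨swap K K1 i, swap K K1 j, (swap K K1).injective.ne hij,
    fun m => ?_, ?_⟩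
  · simpa [sigma_of_conj_ne K K1 hcb, Perm.mul_apply, swap_apply_eq_iff] using
      hfix (swap K K1 m)
  · have ha : a = swap K K1 * sigma K K1 a * swap K K1 := by
      rw [sigma_of_conj_ne K K1 hnc, swap_mul_self_mul, mul_assoc, swap_mul_self, mul_one]
    rw [ha, heq, sigma_of_conj_ne K K1 hcb, swap_apply_apply, swap_inv]
    simp only [← mul_assoc, swap_mul_self, one_mul]

end Adjacent

/-- A fixed-point-free involution all of whose descents commute with it is `(0 1)(2 3)⋯`. -/
lemma apply_div_two_eq_of_descents_commute {a : Perm (Fin N)} (ha : a * a = 1)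
    (hfpf : ∀ m, a m ≠ m)
    (hcomm : ∀ K K1 : Fin N, (K1 : ℕ) = K + 1 → (a K1 : ℕ) < a K →
      swap K K1 * a * swap K K1 = a) (m : Fin N) :
    (a m : ℕ) / 2 = m / 2 := by
  have haa := apply_apply_of_mul_self ha
  have hfp := fun k => Fin.val_ne_of_ne (hfpf k)
  induction hm : (m : ℕ) using Nat.strong_induction_on generalizing m with
  | _ n ih =>
  subst hm
  have hlow : ∀ k : Fin N, (k : ℕ) < 2 * ((m : ℕ) / 2) →
      (a k : ℕ) < 2 * ((m : ℕ) / 2) := fun k hk => by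
    have := ih k (by omega) k rfl
    omega
  have hhigh : ∀ k : Fin N, 2 * ((m : ℕ) / 2) ≤ k → 2 * ((m : ℕ) / 2) ≤ (a k : ℕ) :=
      fun k hk => by
    by_contra h
    have := hlow (a k) (by omega)
    rw [haa] at this
    omega
  rcases Nat.even_or_odd' (m : ℕ) with ⟨t, ht | ht⟩
  · -- the descent of `a` just below `a m` cannot commute with `a` unless `a m = m + 1`
    by_contra hne
    have := hhigh m (by omega)
    have := hfp m
    set K : Fin N := ⟨(a m : ℕ) - 1, by omega⟩ with hK
    have hadj : (a m : ℕ) = K + 1 := by simp only [hK]; omega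
    have hKm : (a K : ℕ) ≠ m := fun e => by
      have := congrArg Fin.val (congrArg a (Fin.ext e))
      rw [haa] at this
      simp only [hK] at this
      omega
    have := hhigh K (by simp only [hK]; omega)
    rcases (swap_conj_eq_iff K (a m) hadj a).mp
      (hcomm K (a m) hadj (by rw [haa]; omega)) with h | h <;>
    · have := congrArg Fin.val h.2
      rw [haa] at this
      omega
  · have h0 : 2 * t < N := by omega
    have := ih (2 * t) (by omega) ⟨2 * t, h0⟩ rfl
    have := hfp ⟨2 * t, h0⟩
    have e : a ⟨2 * t, h0⟩ = m := Fin.ext (by simp only at *; omega)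
    rw [← e, haa]
    simp only
    omega

lemma apply_div_two_eq_of_cornerLE {a b : Perm (Fin N)} (hb : b * b = 1)
    (hpa : ∀ m, (a m : ℕ) / 2 = m / 2) (hba : CornerLE b a) (m : Fin N) :
    (b m : ℕ) / 2 = m / 2 := by
  have hle : ∀ k : Fin N, (b k : ℕ) / 2 ≤ k / 2 := by
    intro k
    by_contra h
    have h0 : corner a (2 * (k / 2) + 1) (2 * (k / 2) + 2) = 0 := by
      rw [corner, Finset.card_eq_zero, Finset.filter_eq_empty_iff]
      intro j _ hj
      have := hpa j
      omega
    have h1 : 0 < corner b (2 * (k / 2) + 1) (2 * (k / 2) + 2) :=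
      Finset.card_pos.mpr ⟨k, by
        simp only [Finset.mem_filter, Finset.mem_univ, true_and]
        omega⟩
    have := hba (2 * (k / 2) + 1) (2 * (k / 2) + 2)
    omega
  have := hle (b m)
  rw [apply_apply_of_mul_self hb] at this
  have := hle m
  omega

lemma bruhatLE_mul_swap_of_pair {a b : Perm (Fin N)} (hpb : ∀ m, (b m : ℕ) / 2 = m / 2)
    {P Q : Fin N} (hQ : (Q : ℕ) = P + 1) (haP : a P = Q) (haQ : a Q = P) (hbP : b P = P)
    (hba : bruhatLE b a) : bruhatLE b (a * swap P Q) := by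
  have hPQ : P ≠ Q := fun e => by rw [e] at hQ; omega
  refine bruhatLE_of_cornerLE fun x y => ?_
  have master := corner_mul_swap a P Q hPQ x y
  rw [haP, haQ] at master
  by_cases hxy : x = P ∧ y = Q
  · obtain ⟨rfl, rfl⟩ := hxy
    have : corner b P Q = 0 := by
      rw [corner, Finset.card_eq_zero, Finset.filter_eq_empty_iff]
      intro k _ ⟨hk, hbk⟩
      rcases eq_or_ne k P with rfl | hkP
      · rw [hbP] at hbk
        omega
      · have := hpb k
        have := Fin.val_ne_of_ne hkP
        omega
    omega
  · have := cornerLE_of_bruhatLE hba x y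
    split_ifs at master <;> omega

lemma InvolCovBy.eq_mul_swap_of_pair {a b : Perm (Fin N)} (ha : a * a = 1)
    (hpa : ∀ m, (a m : ℕ) / 2 = m / 2) (hpb : ∀ m, (b m : ℕ) / 2 = m / 2) {P Q : Fin N}
    (hPQ : P < Q) (haP : a P = Q) (hbP : b P = P) (hcov : InvolCovBy b a) :
    a = b * swap P Q := by
  obtain ⟨hba, -, hmin⟩ := hcov
  have haQ : a Q = P := by rw [← haP, apply_apply_of_mul_self ha]
  have hPQv : (P : ℕ) < Q := hPQ
  have hQ : (Q : ℕ) = P + 1 := by have := hpa P; rw [haP] at this; omega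
  have hcomm : a * swap P Q = swap P Q * a := by
    rw [Equiv.mul_swap_eq_swap_mul, haP, haQ, swap_comm]
  have hc_inv : a * swap P Q * (a * swap P Q) = 1 := by
    simp only [mul_assoc]
    rw [← mul_assoc (swap P Q) a, ← hcomm]
    simp only [← mul_assoc, ha, one_mul, swap_mul_self]
  have hc_le := mul_swap_le_of_descent P Q hQ (x := a) (by rw [haP, haQ]; exact hPQv)
  have hbc := bruhatLE_mul_swap_of_pair hpb hQ haP haQ hbP hba
  rcases hmin _ hc_inv hbc hc_le with h | h
  · rw [← h, mul_assoc, swap_mul_self, mul_one]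
  · have := congrArg (· P) h
    simp only [Perm.mul_apply, swap_apply_left, haQ, haP] at this
    exact absurd this hPQ.ne

lemma InvolCovBy.eq_mul_swap_of_pairing {a b : Perm (Fin N)} (ha : a * a = 1)
    (hb : b * b = 1) (hfpf : ∀ m, a m ≠ m) (hpa : ∀ m, (a m : ℕ) / 2 = m / 2)
    (hbf : ∃ f, b f = f) (hcov : InvolCovBy b a) :
    ∃ i j : Fin N, i ≠ j ∧ (∀ m, b m = m ↔ m = i ∨ m = j) ∧ a = b * swap i j := by
  obtain ⟨f, hf⟩ := hbf
  have hpb := apply_div_two_eq_of_cornerLE hb hpa (cornerLE_of_bruhatLE hcov.1)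
  have hbaf : b (a f) = a f := by
    have h1 := Fin.val_ne_of_ne (hfpf f)
    have h2 : (b (a f) : ℕ) ≠ f := by
      have := b.injective.ne (hfpf f)
      rw [hf] at this
      exact Fin.val_ne_of_ne this
    have := hpb (a f)
    have := hpa f
    exact Fin.ext (by omega)
  have key : a = b * swap f (a f) := by
    rcases lt_or_gt_of_ne (hfpf f).symm with h | h
    · exact hcov.eq_mul_swap_of_pair ha hpa hpb h rfl hf
    · rw [swap_comm]
      exact hcov.eq_mul_swap_of_pair ha hpa hpb h (apply_apply_of_mul_self ha f) hbaf
  refine ⟨f, a f, (hfpf f).symm, fun m => ⟨fun hm => ?_, ?_⟩, key⟩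
  · by_contra h
    push Not at h
    apply hfpf m
    rw [key, Perm.mul_apply, swap_apply_of_ne_of_ne h.1 h.2, hm]
  · rintro (rfl | rfl) <;> assumption

theorem InvolCovBy.eq_mul_swap {a b : Perm (Fin N)} (ha : a * a = 1) (hb : b * b = 1)
    (hfpf : ∀ m, a m ≠ m) (hbf : ∃ f, b f = f) (hcov : InvolCovBy b a) :
    ∃ i j : Fin N, i ≠ j ∧ (∀ m, b m = m ↔ m = i ∨ m = j) ∧ a = b * swap i j := by
  induction hL : len a using Nat.strong_induction_on generalizing a b with
  | _ L ih =>
  by_cases hconj : ∃ K K1 : Fin N, (K1 : ℕ) = K + 1 ∧ (a K1 : ℕ) < a K ∧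
      ¬swap K K1 * a * swap K K1 = a
  · obtain ⟨K, K1, hadj, hda, hnc⟩ := hconj
    obtain ⟨hdb, hcov'⟩ := hcov.map_sigma K K1 hadj ha hb hfpf hbf hda hnc
    obtain ⟨i, j, hij, hfix, heq⟩ := ih _ (hL ▸ len_sigma_lt_of_descent K K1 hadj ha hda)
      (sigma_mul_self K K1 ha) (sigma_mul_self K K1 hb) (sigma_apply_ne_self K K1 hnc hfpf)
      (exists_sigma_apply_eq_self K K1 hadj hdb hbf) hcov' rfl
    exact eq_mul_swap_of_sigma K K1 hadj hnc hdb hbf hij hfix heq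
  · push Not at hconj
    exact hcov.eq_mul_swap_of_pairing ha hb hfpf
      (apply_div_two_eq_of_descents_commute ha hfpf hconj) hbf

theorem InvolCovBy.eq {a a' b : Perm (Fin N)} (ha : a * a = 1) (ha' : a' * a' = 1)
    (hb : b * b = 1) (hfpf : ∀ m, a m ≠ m) (hfpf' : ∀ m, a' m ≠ m) (hbf : ∃ f, b f = f)
    (hcov : InvolCovBy b a) (hcov' : InvolCovBy b a') : a = a' := by
  obtain ⟨i, j, hij, hfix, rfl⟩ := hcov.eq_mul_swap ha hb hfpf hbf
  obtain ⟨i', j', hij', hfix', rfl⟩ := hcov'.eq_mul_swap ha' hb hfpf' hbf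
  have hi := (hfix i').mp ((hfix' i').mpr (.inl rfl))
  have hj := (hfix j').mp ((hfix' j').mpr (.inr rfl))
  rcases hi with rfl | rfl <;> rcases hj with rfl | rfl
  · exact absurd rfl hij'
  · rfl
  · rw [swap_comm]
  · exact absurd rfl hij'

/-! ## Twisted involutions -/

lemma w0_mul_w0 (N : ℕ) : w0 N * w0 N = 1 := by
  ext m
  simp [w0]

lemma w0_mul_w0_mul (x : Perm (Fin N)) : w0 N * (w0 N * x) = x := by
  rw [← mul_assoc, w0_mul_w0, one_mul]

lemma w0_apply_ne_self (n : ℕ) (m : Fin (2 * n)) : w0 (2 * n) m ≠ m := by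
  intro e
  have h := congrArg Fin.val e
  simp only [w0, Fin.revPerm_apply, Fin.val_rev] at h
  omega

lemma len_w0_mul_add_len (x : Perm (Fin N)) :
    len (w0 N * x) + len x = (univ.filter fun p : Fin N × Fin N => p.1 < p.2).card := by
  have e1 : (univ.filter fun p : Fin N × Fin N =>
        p.1 < p.2 ∧ (w0 N * x) p.2 < (w0 N * x) p.1)
      = univ.filter fun p : Fin N × Fin N => p.1 < p.2 ∧ x p.1 < x p.2 := by
    refine Finset.filter_congr fun p _ => ?_
    simp only [w0, Perm.mul_apply, Fin.revPerm_apply, Fin.rev_lt_rev]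
  rw [len, len, e1, ← Finset.card_union_of_disjoint]
  · congr 1
    ext p
    simp only [Finset.mem_union, Finset.mem_filter, Finset.mem_univ, true_and]
    constructor
    · rintro (⟨h1, _⟩ | ⟨h1, _⟩) <;> exact h1
    · intro h1
      rcases lt_trichotomy (x p.1) (x p.2) with h | h | h
      · exact .inl ⟨h1, h⟩
      · exact absurd (x.injective h) h1.ne
      · exact .inr ⟨h1, h⟩
  · rw [Finset.disjoint_filter]
    exact fun p _ h1 h2 => lt_asymm h1.2 h2.2

lemma bruhatLE_w0_mul {u v : Perm (Fin N)} (h : bruhatLE u v) :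
    bruhatLE (w0 N * v) (w0 N * u) := by
  induction h with
  | refl => exact .refl
  | @tail b c _ hbc ih =>
    obtain ⟨t, ht, rfl, hl⟩ := hbc
    have key : w0 N * b = w0 N * (b * t) * t := by
      obtain ⟨i, j, -, rfl⟩ := ht
      rw [mul_assoc, mul_assoc, swap_mul_self, mul_one]
    refine .head ⟨t, ht, key, ?_⟩ ih
    have := len_w0_mul_add_len (b * t)
    have := len_w0_mul_add_len b
    omega

lemma mem_twInvSet_iff (x : Perm (Fin N)) :
    x ∈ twInvSet N ↔ (w0 N * x) * (w0 N * x) = 1 := by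
  rw [show (w0 N * x) * (w0 N * x) = theta x * x by simp only [theta, mul_assoc],
    mul_eq_one_iff_eq_inv]
  rfl

lemma cycleType_eq_replicate_two {n : ℕ} {y : Perm (Fin (2 * n))} (hy : y * y = 1)
    (hfpf : ∀ m, y m ≠ m) : y.cycleType = Multiset.replicate n 2 := by
  have hall : ∀ c ∈ y.cycleType, c = 2 := by
    intro c hc
    have h2 := Perm.two_le_of_mem_cycleType hc
    have hdvd : c ∣ 2 := (Perm.dvd_of_mem_cycleType hc).trans
      (orderOf_dvd_of_pow_eq_one (by rw [pow_two]; exact hy))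
    have := Nat.le_of_dvd two_pos hdvd
    omega
  have hsum := Perm.sum_cycleType y
  have hsupp : y.support = Finset.univ := by
    ext m
    simp [Perm.mem_support, hfpf m]
  rw [hsupp, Finset.card_univ, Fintype.card_fin, Multiset.eq_replicate_of_mem hall,
    Multiset.sum_replicate, smul_eq_mul] at hsum
  rw [Multiset.eq_replicate_of_mem hall]
  congr 1
  omega

/-- Fixed-point-free involutions of `Fin (2 * n)` form one conjugacy class, that of `w0`. -/
lemma mem_iotaSet_iff {n : ℕ} (x : Perm (Fin (2 * n))) :
    x ∈ iotaSet (2 * n) ↔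
      (w0 (2 * n) * x) * (w0 (2 * n) * x) = 1 ∧ ∀ m, (w0 (2 * n) * x) m ≠ m := by
  have key : ∀ w : Perm (Fin (2 * n)),
      w0 (2 * n) * (theta w⁻¹ * w) = w⁻¹ * w0 (2 * n) * w := fun w => by
    simp only [theta, ← mul_assoc, w0_mul_w0, one_mul]
  constructor
  · rintro ⟨w, rfl⟩
    rw [key]
    refine ⟨?_, fun m hm => w0_apply_ne_self n (w m) ?_⟩
    · simp only [mul_assoc, mul_inv_cancel_left, w0_mul_w0_mul, inv_mul_cancel]
    · simp only [Perm.mul_apply, Perm.inv_def, Equiv.symm_apply_eq] at hm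
      exact hm
  · rintro ⟨h1, h2⟩
    have hconj : IsConj (w0 (2 * n) * x) (w0 (2 * n)) := by
      rw [Perm.isConj_iff_cycleType_eq, cycleType_eq_replicate_two h1 h2,
        cycleType_eq_replicate_two (w0_mul_w0 _) (w0_apply_ne_self n)]
    obtain ⟨c, hc⟩ := isConj_iff.mp hconj
    refine ⟨c, mul_left_cancel (a := w0 (2 * n)) (Eq.symm ?_)⟩
    calc w0 (2 * n) * (theta c⁻¹ * c) = c⁻¹ * w0 (2 * n) * c := key c
      _ = c⁻¹ * (c * (w0 (2 * n) * x) * c⁻¹) * c := by rw [hc]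
      _ = w0 (2 * n) * x := by group

lemma involCovBy_w0_mul {u w : Perm (Fin N)} (h : CovByIn bruhatLE (twInvSet N) u w) :
    InvolCovBy (w0 N * w) (w0 N * u) := by
  obtain ⟨-, -, hle, hne, hmin⟩ := h
  refine ⟨bruhatLE_w0_mul hle, fun e => hne (mul_left_cancel e).symm, fun z hz h1 h2 => ?_⟩
  have hz' : w0 N * z ∈ twInvSet N := by rwa [mem_twInvSet_iff, w0_mul_w0_mul]
  have h1' := bruhatLE_w0_mul h1
  have h2' := bruhatLE_w0_mul h2
  rw [w0_mul_w0_mul] at h1' h2'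
  rcases hmin _ hz' h2' h1' with he | he
  · right
    rw [← he, w0_mul_w0_mul]
  · left
    rw [← he, w0_mul_w0_mul]

end Bruhat

/-- a twisted involution `w ∉ ι` covers at most one twisted identity in the
Bruhat order on twisted involutions. -/
theorem stmt13 (n : ℕ) (w : Equiv.Perm (Fin (2*n)))
    (hw : w ∈ twInvSet (2*n)) (hw' : w ∉ iotaSet (2*n)) :
    ∀ u u' : Equiv.Perm (Fin (2*n)), u ∈ iotaSet (2*n) → u' ∈ iotaSet (2*n) →
      CovByIn bruhatLE (twInvSet (2*n)) u w → CovByIn bruhatLE (twInvSet (2*n)) u' w →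
      u = u' := by
  intro u u' hu hu' hcov hcov'
  have hA := (Bruhat.mem_twInvSet_iff w).mp hw
  have hAfix : ∃ f, (w0 (2*n) * w) f = f := by
    by_contra h
    push Not at h
    exact hw' ((Bruhat.mem_iotaSet_iff w).mpr ⟨hA, h⟩)
  obtain ⟨hB, hBfpf⟩ := (Bruhat.mem_iotaSet_iff u).mp hu
  obtain ⟨hB', hBfpf'⟩ := (Bruhat.mem_iotaSet_iff u').mp hu'
  exact mul_left_cancel ((Bruhat.involCovBy_w0_mul hcov).eq hB hB' hA hBfpf hBfpf' hAfix
    (Bruhat.involCovBy_w0_mul hcov'))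
end

section
/- Let Π be a finite poset with a maximum element and M a special partial matching of Π. If x ∈ Π satisfies M(x) ≤ x, then M maps the principal order ideal I_x = {y : y ≤ x} into itself; consequently, if M(x) is covered by x, then M restricts to a special partial matching of I_x. -/
/-! Descending induction on `y ≤ x`: if `y < x`, pick `z` with `y ⋖ z ≤ x`; then either
`M y = z ≤ x`, or `M y ≤ M z ≤ x` by the defining property of a special matching.
Since `I_x` is downward closed, its cover relations are exactly those of `Π` lying below `x`,
so every axiom of a special matching restricts to `I_x`. -/

open Equiv

section CovByIn

variable {α : Type*} [PartialOrder α] {a x y : α}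

theorem covByIn_univ_iff : CovByIn (· ≤ ·) Set.univ x y ↔ x ⋖ y := by
  simp [CovByIn, covBy_iff_lt_and_eq_or_eq, lt_iff_le_and_ne, and_assoc]

theorem covByIn_Iic_iff : CovByIn (· ≤ ·) (Set.Iic a) x y ↔ x ⋖ y ∧ y ≤ a := by
  simp only [CovByIn, Set.mem_Iic, covBy_iff_lt_and_eq_or_eq, lt_iff_le_and_ne]
  constructor
  · rintro ⟨-, hya, hxy, hne, h⟩
    exact ⟨⟨⟨hxy, hne⟩, fun z hxz hzy => h z (hzy.trans hya) hxz hzy⟩, hya⟩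
  · rintro ⟨⟨⟨hxy, hne⟩, h⟩, hya⟩
    exact ⟨hxy.trans hya, hya, hxy, hne, fun z _ => h z⟩

end CovByIn

theorem mapsTo_Iic_of_map_le_self {α : Type*} [PartialOrder α] [WellFoundedGT α]
    [IsStronglyAtomic α] {M : α → α} (hM : ∀ ⦃y z⦄, y ⋖ z → M y ≠ z → M y ≤ M z) {x : α}
    (hx : M x ≤ x) : Set.MapsTo M (Set.Iic x) (Set.Iic x) := by
  intro y hy
  induction y using WellFoundedGT.induction with
  | _ y ih =>
  obtain rfl | hlt := hy.eq_or_lt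
  · exact hx
  obtain ⟨z, hyz, hzx⟩ := exists_covBy_le_of_lt hlt
  by_cases hMy : M y = z
  · exact hMy ▸ hzx
  · exact (hM hyz hMy).trans (ih z hyz.lt hzx)

namespace IsSPM

variable {α : Type*} [PartialOrder α] {t : α} {M : α → α}

theorem map_map (hM : IsSPM (· ≤ ·) Set.univ t M) (x : α) : M (M x) = x :=
  hM.2.2.1 x trivial

theorem covBy_trichotomy (hM : IsSPM (· ≤ ·) Set.univ t M) (x : α) :
    M x ⋖ x ∨ M x = x ∨ x ⋖ M x := by
  simpa only [covByIn_univ_iff] using hM.2.2.2.2.1 x trivial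

theorem map_lt_map_of_covBy (hM : IsSPM (· ≤ ·) Set.univ t M) {x y : α} (h : x ⋖ y)
    (hne : M x ≠ y) : M x < M y :=
  have h' := hM.2.2.2.2.2 x trivial y trivial (covByIn_univ_iff.2 h) hne
  lt_of_le_of_ne h'.1 h'.2

theorem restrict_Iic (hM : IsSPM (· ≤ ·) Set.univ t M) {x : α}
    (hmaps : Set.MapsTo M (Set.Iic x) (Set.Iic x)) (hx : M x ⋖ x) :
    IsSPM (· ≤ ·) (Set.Iic x) x M := by
  refine ⟨le_rfl, hmaps, fun y _ => hM.map_map y, covByIn_Iic_iff.2 ⟨hx, le_rfl⟩, ?_, ?_⟩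
  · intro y hy
    simp only [covByIn_Iic_iff]
    rcases hM.covBy_trichotomy y with h | h | h
    exacts [Or.inl ⟨h, hy⟩, Or.inr (Or.inl h), Or.inr (Or.inr ⟨h, hmaps hy⟩)]
  · intro y _ z _ hyz hne
    have h := hM.map_lt_map_of_covBy (covByIn_Iic_iff.1 hyz).1 hne
    exact ⟨h.le, h.ne⟩

end IsSPM

theorem stmt14_general {α : Type*} [PartialOrder α] [Fintype α] (t : α)
    (M : α → α) (hM : IsSPM (· ≤ ·) Set.univ t M) (x : α) (hx : M x ≤ x) :
    (∀ y, y ≤ x → M y ≤ x) ∧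
    (CovByIn (· ≤ ·) Set.univ (M x) x → IsSPM (· ≤ ·) (Set.Iic x) x M) := by
  have hmaps : Set.MapsTo M (Set.Iic x) (Set.Iic x) :=
    mapsTo_Iic_of_map_le_self (fun _ _ h hne => (hM.map_lt_map_of_covBy h hne).le) hx
  exact ⟨fun _ hy => hmaps hy, fun hcov => hM.restrict_Iic hmaps (covByIn_univ_iff.1 hcov)⟩

/-- an SPM `M` of a finite poset with maximum maps the principal order ideal
`I_x` into itself whenever `M(x) ≤ x`; if moreover `M(x) ⋖ x`, then `M` restricts to an SPM
of `I_x`. -/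
theorem stmt14 {α : Type*} [PartialOrder α] [Fintype α] (t : α) (ht : ∀ x, x ≤ t)
    (M : α → α) (hM : IsSPM (· ≤ ·) Set.univ t M) (x : α) (hx : M x ≤ x) :
    (∀ y, y ≤ x → M y ≤ x) ∧
    (CovByIn (· ≤ ·) Set.univ (M x) x → IsSPM (· ≤ ·) (Set.Iic x) x M) :=
  stmt14_general t M hM x hx
end
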